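/- arXiv:2309.07529 — 5 statements merged into one kernel-verified Lean document; each statement's English description precedes it below -/
import Mathlib

section
/- Assume μ has finite moments of all orders. For every real polynomial P of degree ≥ 1, the sequence E[|X_{P,L}|²] = (1/|Λ_L|) Var(Tr P(H^ω_L)) converges as L → ∞ (so the limiting variance σ_P² is attained as a genuine limit, not merely a limsup). -/
open MeasureTheory ProbabilityTheory Filter Topology

noncomputable section

/-- Configuration space `Ω = ℝ^{ℤ^d}`. -/
abbrev Cfg (d : ℕ) : Type := (Fin d → ℤ) → ℝ

/-- The discrete cube `Λ_L = {n ∈ ℤ^d : |n_i| ≤ L}`. -/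
def cube (d L : ℕ) : Finset (Fin d → ℤ) :=
  Fintype.piFinset fun _ => Finset.Icc (-(L : ℤ)) (L : ℤ)

/-- The finite-volume Anderson Hamiltonian `H^ω_L` as a `Λ_L × Λ_L` real matrix. -/
def ham (d L : ℕ) (ω : Cfg d) : Matrix (cube d L) (cube d L) ℝ :=
  Matrix.of fun n m =>
    if (∑ i, |(n : Fin d → ℤ) i - (m : Fin d → ℤ) i|) = 1 then 1
    else if n = m then ω (n : Fin d → ℤ) else 0

/-- Continuous functional calculus for real symmetric matrices:
`f(A) = Σ_i f(λ_i) ψ_i ψ_iᵀ` in an orthonormal eigenbasis (junk value `0` if `A` is not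
symmetric). -/
def matFC {N : Type*} [Fintype N] [DecidableEq N] (f : ℝ → ℝ) (A : Matrix N N ℝ) :
    Matrix N N ℝ :=
  if hA : A.IsHermitian then
    Matrix.of fun n m =>
      ∑ i, f (hA.eigenvalues i) * hA.eigenvectorBasis i n * hA.eigenvectorBasis i m
  else 0

/-- The centered, normalized linear eigenvalue statistic
`X_{f,L}(ω) = |Λ_L|^{-1/2} (Tr f(H^ω_L) - E[Tr f(H^ω_L)])`. -/
def XX (d L : ℕ) (Pr : Measure (Cfg d)) (f : ℝ → ℝ) (ω : Cfg d) : ℝ :=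
  (Real.sqrt ((cube d L).card))⁻¹ *
    ((matFC f (ham d L ω)).trace - ∫ ω', (matFC f (ham d L ω')).trace ∂Pr)

/-- The class `C¹_P(ℝ)`: differentiable functions with continuous derivative of at most
polynomial growth. -/
def CP1 (f : ℝ → ℝ) : Prop :=
  Differentiable ℝ f ∧ Continuous (deriv f) ∧ ∃ P : Polynomial ℝ, ∀ x, |deriv f x| ≤ P.eval x

/-- Hypothesis (M) on the single-site distribution. -/
def HypM (μ : Measure ℝ) : Prop :=
  (∀ k : ℕ, Integrable (fun x => |x| ^ k) μ) ∧
  ∃ C a : ℝ, 1 ≤ C ∧ 1 ≤ a ∧ ∀ k : ℕ, (∫ x, |x| ^ k ∂μ) ≤ C * a ^ k * (k : ℝ) ^ k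

/-- The coordinates `(ω_n)` are i.i.d. with common law `μ` under `Pr`. -/
def IID (d : ℕ) (μ : Measure ℝ) (Pr : Measure (Cfg d)) : Prop :=
  iIndepFun (fun (n : Fin d → ℤ) (ω : Cfg d) => ω n) Pr ∧
  ∀ n : Fin d → ℤ, Pr.map (fun ω => ω n) = μ

/-- `∫ g dν̄_{p,L}`, the integral against the modified finite-volume density of states
measure. -/
def nubarInt (d L p : ℕ) (Pr : Measure (Cfg d)) (g : ℝ → ℝ) : ℝ :=
  (((cube d L).card : ℝ))⁻¹ *
    ∑ n ∈ (cube d L).attach,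
      ∫ u in Set.Icc (0 : ℝ) 1,
        ∫ ω, (ω (n : Fin d → ℤ)) ^ (2 * p) *
          matFC g (ham d L (Function.update ω (n : Fin d → ℤ)
            (u * ω (n : Fin d → ℤ)))) n n ∂Pr

/-- Topological support of a measure on `ℝ`. -/
def msupport (μ : Measure ℝ) : Set ℝ :=
  {x | ∀ U : Set ℝ, IsOpen U → x ∈ U → μ U ≠ 0}

end

/-- `X_{P,L}` for a polynomial test function. -/
noncomputable def XPoly (d L : ℕ) (Pr : Measure (Cfg d)) (P : Polynomial ℝ) (ω : Cfg d) : ℝ :=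
  (Real.sqrt ((cube d L).card))⁻¹ *
    ((Polynomial.aeval (ham d L ω) P).trace -
      ∫ ω', (Polynomial.aeval (ham d L ω') P).trace ∂Pr)

/-!
Write `Tr P(H_L) = ∑_{x ∈ Λ_L} D_x` with `D_x = P(H_L)_{xx}`. As `H` only couples nearest
neighbours, `D_x` is a polynomial in the potential on the box of radius `k = deg P` around `x`, and
away from the boundary of `Λ_L` it is the translate `F ∘ τ_x` of the infinite-volume entry
`F = P(H)_{00}`. By independence `Cov(D_x, D_y) = 0` once `|x - y|_∞ > 2k`, and by stationarity
`Cov(D_x, D_y) = Cov(F, F ∘ τ_{y-x})` when both boxes lie inside `Λ_L`. Hence every row sum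
`∑_y Cov(D_x, D_y)` with `x` at distance `≥ 3k` from the boundary equals
`σ² = ∑_{|z|_∞ ≤ 2k} Cov(F, F ∘ τ_z)`, while all row sums are bounded uniformly in `L` and `x`,
because `|D_x|` is dominated by a translate of a fixed function with finite moments. The normalized
variance `|Λ_L|⁻¹ ∑_x ∑_y Cov(D_x, D_y)` therefore differs from `σ²` only through the boundary
layer, whose relative volume tends to `0`.
-/

noncomputable section

open Finset

instance ENNReal.HolderTriple.natCast_two_mul (n : ℕ) :
    ENNReal.HolderTriple (2 * n : ℕ) (2 * n : ℕ) n where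
  inv_add_inv_eq_inv := by
    push_cast
    rw [ENNReal.mul_inv (by simp) (by simp), ← add_mul, ENNReal.inv_two_add_inv_two, one_mul]

namespace MeasureTheory

variable {Ω : Type*} [MeasurableSpace Ω]

def finiteMoments (P : Measure Ω) [IsFiniteMeasure P] : Subalgebra ℝ (Ω → ℝ) where
  carrier := {f | Measurable f ∧ ∀ p : ℕ, MemLp f p P}
  mul_mem' hf hg := ⟨hf.1.mul hg.1, fun p => (hg.2 (2 * p)).mul (hf.2 (2 * p))⟩
  add_mem' hf hg := ⟨hf.1.add hg.1, fun p => (hf.2 p).add (hg.2 p)⟩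
  algebraMap_mem' c := ⟨measurable_const, fun _ => memLp_const c⟩

variable {P : Measure Ω} [IsFiniteMeasure P] {f : Ω → ℝ}

lemma abs_mem_finiteMoments (hf : f ∈ finiteMoments P) : (fun ω => |f ω|) ∈ finiteMoments P :=
  ⟨hf.1.abs, fun p => (hf.2 p).abs⟩

lemma comp_mem_finiteMoments (hf : f ∈ finiteMoments P) {T : Ω → Ω}
    (hT : MeasurePreserving T P P) : f ∘ T ∈ finiteMoments P :=
  ⟨hf.1.comp hT.measurable, fun p => (hf.2 p).comp_measurePreserving hT⟩

end MeasureTheory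

lemma DependsOn.comp_updateFinset_restrict {ι α β : Type*} [DecidableEq ι] {f : (ι → α) → β}
    {s : Finset ι} (hf : DependsOn f s) (x₀ : ι → α) :
    (f ∘ Function.updateFinset x₀ s) ∘ s.restrict = f :=
  funext fun _ => hf fun i hi => by simp [Function.updateFinset, Finset.mem_coe.1 hi]

namespace ProbabilityTheory

variable {Ω : Type*} [MeasurableSpace Ω] {P : Measure Ω} [IsFiniteMeasure P] {X Y : Ω → ℝ}

lemma abs_covariance_le (hX : MemLp X 2 P) (hY : MemLp Y 2 P) :
    |cov[X, Y; P]| ≤ (Var[X; P] + Var[Y; P]) / 2 := by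
  have h₁ := variance_nonneg (X + Y) P
  have h₂ := variance_nonneg (X - Y) P
  rw [variance_add hX hY] at h₁
  rw [variance_sub hX hY] at h₂
  rw [abs_le]
  constructor <;> linarith

lemma iIndepFun.indepFun_of_dependsOn {ι E β γ : Type*} [MeasurableSpace E] [Nonempty E]
    [MeasurableSpace β] [MeasurableSpace γ] {P : Measure (ι → E)}
    (hP : iIndepFun (fun i (ω : ι → E) => ω i) P) {S T : Finset ι} (hST : Disjoint S T)
    {f : (ι → E) → β} {g : (ι → E) → γ} (hf : Measurable f) (hg : Measurable g)
    (hfS : DependsOn f S) (hgT : DependsOn g T) : IndepFun f g P := by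
  classical
  let x₀ : ι → E := fun _ => Classical.arbitrary E
  rw [← hfS.comp_updateFinset_restrict x₀, ← hgT.comp_updateFinset_restrict x₀]
  exact (hP.indepFun_finset S T hST fun i => measurable_pi_apply i).comp
    (hf.comp measurable_updateFinset) (hg.comp measurable_updateFinset)

end ProbabilityTheory

lemma Matrix.aeval_apply {ι : Type*} [Fintype ι] [DecidableEq ι] (A : Matrix ι ι ℝ)
    (P : Polynomial ℝ) (i k : ι) :
    Polynomial.aeval A P i k = ∑ j ∈ range (P.natDegree + 1), P.coeff j * (A ^ j) i k := by
  simp [Polynomial.aeval_eq_sum_range, Matrix.sum_apply]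

section MatrixEntries

variable {Ω ι : Type*} [Fintype ι] [DecidableEq ι] (S : Subalgebra ℝ (Ω → ℝ))
  {A : Ω → Matrix ι ι ℝ}

lemma Matrix.pow_apply_mem (hA : ∀ i k, (fun ω => A ω i k) ∈ S) (j : ℕ) (i k : ι) :
    (fun ω => (A ω ^ j) i k) ∈ S := by
  induction j generalizing i with
  | zero => exact S.algebraMap_mem ((1 : Matrix ι ι ℝ) i k)
  | succ j ih =>
    have h : (fun ω => (A ω ^ (j + 1)) i k) =
        ∑ l, (fun ω => A ω i l) * fun ω => (A ω ^ j) l k := by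
      ext ω
      simp [pow_succ', Matrix.mul_apply]
    exact h ▸ S.sum_mem fun l _ => S.mul_mem (hA i l) (ih l)

lemma Matrix.aeval_apply_mem (hA : ∀ i k, (fun ω => A ω i k) ∈ S) (P : Polynomial ℝ)
    (i k : ι) : (fun ω => Polynomial.aeval (A ω) P i k) ∈ S := by
  have h : (fun ω => Polynomial.aeval (A ω) P i k) =
      ∑ j ∈ range (P.natDegree + 1), P.coeff j • fun ω => (A ω ^ j) i k := by
    ext ω
    simp [Matrix.aeval_apply]
  exact h ▸ S.sum_mem fun j _ => S.smul_mem (Matrix.pow_apply_mem S hA j i k) _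

end MatrixEntries

section Averages

variable {α : Type*} [DecidableEq α]

lemma abs_inv_card_mul_sum_sub_le {s t : Finset α} {f : α → ℝ} {σ C : ℝ} (hs : s.Nonempty)
    (hts : t ⊆ s) (heq : ∀ x ∈ t, f x = σ) (hle : ∀ x ∈ s, |f x| ≤ C) :
    |(#s : ℝ)⁻¹ * ∑ x ∈ s, f x - σ| ≤ (1 - #t / #s) * (C + |σ|) := by
  have hpos : (0 : ℝ) < #s := by exact_mod_cast hs.card_pos
  have hr : 0 ≤ 1 - (#t : ℝ) / #s := by
    rw [sub_nonneg, div_le_one hpos]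
    exact_mod_cast card_le_card hts
  have hrest : |∑ x ∈ s \ t, f x| ≤ (#s - #t) * C := by
    calc _ ≤ ∑ x ∈ s \ t, C :=
          (abs_sum_le_sum_abs _ _).trans (sum_le_sum fun x hx => hle x (sdiff_subset hx))
      _ = (#s - #t) * C := by
          rw [sum_const, nsmul_eq_mul, card_sdiff_of_subset hts, Nat.cast_sub (card_le_card hts)]
  have hsplit : (#s : ℝ)⁻¹ * ∑ x ∈ s, f x - σ =
      (#s : ℝ)⁻¹ * ∑ x ∈ s \ t, f x - (1 - #t / #s) * σ := by
    rw [← sum_sdiff hts, sum_congr rfl heq, sum_const, nsmul_eq_mul]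
    field_simp
    ring
  rw [hsplit]
  calc _ ≤ |(#s : ℝ)⁻¹ * ∑ x ∈ s \ t, f x| + |(1 - #t / #s) * σ| := abs_sub _ _
    _ = (#s : ℝ)⁻¹ * |∑ x ∈ s \ t, f x| + (1 - #t / #s) * |σ| := by
        rw [abs_mul, abs_mul, abs_inv, abs_of_pos hpos, abs_of_nonneg hr]
    _ ≤ (#s : ℝ)⁻¹ * ((#s - #t) * C) + (1 - #t / #s) * |σ| := by gcongr
    _ = (1 - #t / #s) * (C + |σ|) := by field_simp

lemma tendsto_inv_card_mul_sum {s t : ℕ → Finset α} {f : ℕ → α → ℝ} {σ C : ℝ}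
    (hs : ∀ L, (s L).Nonempty) (hts : ∀ L, t L ⊆ s L)
    (heq : ∀ᶠ L in atTop, ∀ x ∈ t L, f L x = σ) (hle : ∀ L, ∀ x ∈ s L, |f L x| ≤ C)
    (hcard : Tendsto (fun L => (#(t L) : ℝ) / #(s L)) atTop (𝓝 1)) :
    Tendsto (fun L => (#(s L) : ℝ)⁻¹ * ∑ x ∈ s L, f L x) atTop (𝓝 σ) := by
  rw [← tendsto_sub_nhds_zero_iff]
  refine squeeze_zero_norm' ?_ <| by
    simpa using ((tendsto_const_nhds (x := (1 : ℝ))).sub hcard).mul_const (C + |σ|)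
  filter_upwards [heq] with L hL
  exact abs_inv_card_mul_sum_sub_le (hs L) (hts L) hL (hle L)

end Averages

namespace Anderson

variable {d : ℕ}

section Boxes

def box (a : Fin d → ℤ) (q : ℕ) : Finset (Fin d → ℤ) :=
  Fintype.piFinset fun i => Icc (a i - q) (a i + q)

variable {a b c : Fin d → ℤ} {q r : ℕ}

lemma mem_box : c ∈ box a q ↔ ∀ i, |c i - a i| ≤ q := by
  simp only [box, Fintype.mem_piFinset, mem_Icc, abs_le]
  exact forall_congr' fun i => by omega

lemma self_mem_box : a ∈ box a q :=
  mem_box.2 fun i => by simp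

lemma box_mono (h : q ≤ r) : box a q ⊆ box a r := fun c hc =>
  mem_box.2 fun i => (mem_box.1 hc i).trans (by exact_mod_cast h)

lemma box_subset_box (hc : c ∈ box a r) : box c q ⊆ box a (q + r) := fun x hx =>
  mem_box.2 fun i => by
    have := abs_sub_le (x i) (c i) (a i)
    have := mem_box.1 hx i
    have := mem_box.1 hc i
    push_cast
    omega

lemma add_mem_box_iff (t : Fin d → ℤ) : c + t ∈ box (a + t) q ↔ c ∈ box a q := by
  simp only [mem_box, Pi.add_apply, add_sub_add_right_eq_sub]

lemma sub_mem_box_zero : c - a ∈ box 0 q ↔ c ∈ box a q := by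
  simp only [mem_box, Pi.sub_apply, Pi.zero_apply, sub_zero]

lemma disjoint_box {i : Fin d} (h : (q + r : ℤ) < |a i - b i|) : Disjoint (box a q) (box b r) :=
  disjoint_left.2 fun x hxa hxb => by
    have := abs_sub_le (a i) (x i) (b i)
    have := abs_sub_comm (a i) (x i) ▸ mem_box.1 hxa i
    have := mem_box.1 hxb i
    omega

lemma card_box : #(box a q) = (2 * q + 1) ^ d := by
  have h (i : Fin d) : #(Icc (a i - q) (a i + q)) = 2 * q + 1 := by
    rw [Int.card_Icc]
    omega
  simp only [box, Fintype.card_piFinset, h, prod_const, card_univ, Fintype.card_fin]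

lemma cube_eq_box (L : ℕ) : cube d L = box 0 L := by
  ext x
  simp [cube, box]

lemma tendsto_card_cube_sub_div_card_cube (d q : ℕ) :
    Tendsto (fun L : ℕ => (#(cube d (L - q)) : ℝ) / #(cube d L)) atTop (𝓝 1) := by
  have hlin : Tendsto (fun L : ℕ => 1 - 2 * (q : ℝ) / (2 * L + 1)) atTop (𝓝 1) := by
    simpa using tendsto_const_nhds.sub <| tendsto_const_nhds.div_atTop <|
      tendsto_atTop_add_const_right _ 1 <|
        (tendsto_natCast_atTop_atTop (R := ℝ)).const_mul_atTop two_pos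
  have hpow := hlin.pow d
  rw [one_pow] at hpow
  refine hpow.congr' ?_
  filter_upwards [eventually_ge_atTop q] with L hL
  rw [cube_eq_box, cube_eq_box, card_box, card_box, Nat.cast_pow, Nat.cast_pow, ← div_pow]
  congr 1
  push_cast [Nat.cast_sub hL]
  field_simp
  ring

end Boxes

def shift (t : Fin d → ℤ) (ω : Cfg d) : Cfg d := fun x => ω (x + t)

lemma measurable_shift (t : Fin d → ℤ) : Measurable (shift (d := d) t) :=
  measurable_pi_lambda _ fun _ => measurable_pi_apply _

lemma shift_shift (s t : Fin d → ℤ) (ω : Cfg d) : shift s (shift t ω) = shift (s + t) ω := by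
  funext x
  simp only [shift, add_assoc]

section Kernel

def hamInf (ω : Cfg d) (a b : Fin d → ℤ) : ℝ :=
  if ∑ i, |a i - b i| = 1 then 1 else if a = b then ω a else 0

/-- The matrix element `(H^j)_{ab}` of the infinite-volume Hamiltonian, expanded along row `a`
of `H`, which is supported in `box a 1`. -/
def hamInfPow : ℕ → Cfg d → (Fin d → ℤ) → (Fin d → ℤ) → ℝ
  | 0, _, a, b => if a = b then 1 else 0
  | j + 1, ω, a, b => ∑ c ∈ box a 1, hamInf ω a c * hamInfPow j ω c b

variable {ω ω' : Cfg d} {a b c : Fin d → ℤ}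

lemma hamInf_eq_zero (h : b ∉ box a 1) : hamInf ω a b = 0 := by
  refine if_neg (fun h1 => h (mem_box.2 fun i => ?_)) |>.trans (if_neg ?_)
  · rw [abs_sub_comm, Nat.cast_one, ← h1]
    exact single_le_sum (f := fun j => |a j - b j|) (fun j _ => abs_nonneg _) (mem_univ i)
  · rintro rfl
    exact h self_mem_box

lemma hamInf_congr (h : ω a = ω' a) : hamInf ω a b = hamInf ω' a b := by
  rw [hamInf, hamInf, h]

lemma hamInf_shift (t : Fin d → ℤ) : hamInf (shift t ω) a b = hamInf ω (a + t) (b + t) := by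
  simp only [hamInf, shift, Pi.add_apply, add_sub_add_right_eq_sub, add_left_inj]

lemma abs_hamInf : |hamInf ω a b| = hamInf |ω| a b := by
  unfold hamInf
  split_ifs <;> simp

lemma hamInf_nonneg (hω : 0 ≤ ω) : 0 ≤ hamInf ω a b := by
  unfold hamInf
  split_ifs
  exacts [zero_le_one, hω a, le_rfl]

lemma hamInfPow_shift (t : Fin d → ℤ) (j : ℕ) (a b : Fin d → ℤ) :
    hamInfPow j (shift t ω) a b = hamInfPow j ω (a + t) (b + t) := by
  induction j generalizing a with
  | zero => simp [hamInfPow]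
  | succ j ih =>
    refine sum_nbij' (· + t) (· - t) (fun c hc => (add_mem_box_iff t).2 hc)
      (fun c hc => ?_) (fun c _ => add_sub_cancel_right c t) (fun c _ => sub_add_cancel c t)
      (fun c _ => by rw [hamInf_shift, ih])
    rw [← add_mem_box_iff t, sub_add_cancel]
    exact hc

lemma hamInfPow_nonneg (hω : 0 ≤ ω) (j : ℕ) (a b : Fin d → ℤ) : 0 ≤ hamInfPow j ω a b := by
  induction j generalizing a with
  | zero => unfold hamInfPow; split_ifs <;> norm_num
  | succ j ih => exact sum_nonneg fun c _ => mul_nonneg (hamInf_nonneg hω) (ih c)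

lemma hamInf_mem {Ω : Type*} (S : Subalgebra ℝ (Ω → ℝ)) {V : Ω → Cfg d}
    (hV : ∀ x, (fun ω => V ω x) ∈ S) (a b : Fin d → ℤ) : (fun ω => hamInf (V ω) a b) ∈ S := by
  unfold hamInf
  split_ifs
  exacts [S.one_mem, hV a, S.zero_mem]

lemma hamInfPow_mem {Ω : Type*} (S : Subalgebra ℝ (Ω → ℝ)) {V : Ω → Cfg d}
    (hV : ∀ x, (fun ω => V ω x) ∈ S) (j : ℕ) (a b : Fin d → ℤ) :
    (fun ω => hamInfPow j (V ω) a b) ∈ S := by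
  induction j generalizing a with
  | zero => exact S.algebraMap_mem (if a = b then 1 else 0)
  | succ j ih =>
    have h : (fun ω => hamInfPow (j + 1) (V ω) a b) =
        ∑ c ∈ box a 1, (fun ω => hamInf (V ω) a c) * fun ω => hamInfPow j (V ω) c b := by
      ext ω
      simp [hamInfPow]
    exact h ▸ S.sum_mem fun c _ => S.mul_mem (hamInf_mem S hV a c) (ih c)

end Kernel

section FiniteVolume

variable {L : ℕ} {ω : Cfg d}

lemma ham_apply (n m : cube d L) : ham d L ω n m = hamInf ω n m :=
  if_congr Iff.rfl rfl (if_congr Subtype.ext_iff rfl rfl)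

lemma hamPow_succ_apply (j : ℕ) (n m : cube d L) :
    (ham d L ω ^ (j + 1)) n m = ∑ c : cube d L, hamInf ω n c * (ham d L ω ^ j) c m := by
  simp only [pow_succ', Matrix.mul_apply, ham_apply]

lemma sum_cube_hamInf_mul (n : Fin d → ℤ) (F : (Fin d → ℤ) → ℝ) :
    ∑ x ∈ cube d L, hamInf ω n x * F x = ∑ x ∈ cube d L ∩ box n 1, hamInf ω n x * F x :=
  (sum_subset inter_subset_left fun _ hx hx' => by
    rw [hamInf_eq_zero fun h => hx' (mem_inter.2 ⟨hx, h⟩), zero_mul]).symm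

lemma hamPow_apply (j : ℕ) (n m : cube d L) (h : box (n : Fin d → ℤ) j ⊆ cube d L) :
    (ham d L ω ^ j) n m = hamInfPow j ω n m := by
  induction j generalizing n with
  | zero => simp only [pow_zero, Matrix.one_apply, hamInfPow, Subtype.coe_inj]
  | succ j ih =>
    rw [hamPow_succ_apply, hamInfPow]
    have hrow : box (n : Fin d → ℤ) 1 ⊆ cube d L := (box_mono (by omega)).trans h
    calc ∑ c : cube d L, hamInf ω n c * (ham d L ω ^ j) c m
        = ∑ c : cube d L, hamInf ω n c * hamInfPow j ω c m := by
          refine sum_congr rfl fun c _ => ?_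
          by_cases hc : (c : Fin d → ℤ) ∈ box (n : Fin d → ℤ) 1
          · rw [ih c ((box_subset_box hc).trans h)]
          · rw [hamInf_eq_zero hc, zero_mul, zero_mul]
      _ = ∑ c ∈ box (n : Fin d → ℤ) 1, hamInf ω n c * hamInfPow j ω c m := by
          rw [sum_coe_sort (cube d L) fun c => hamInf ω n c * hamInfPow j ω c m,
            sum_cube_hamInf_mul, inter_eq_right.2 hrow]

lemma abs_hamPow_apply_le (j : ℕ) (n m : cube d L) :
    |(ham d L ω ^ j) n m| ≤ hamInfPow j |ω| n m := by
  induction j generalizing n with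
  | zero =>
    simp only [pow_zero, Matrix.one_apply, hamInfPow, Subtype.coe_inj]
    split_ifs <;> norm_num
  | succ j ih =>
    rw [hamPow_succ_apply, hamInfPow]
    have hnn (c : Fin d → ℤ) : 0 ≤ hamInf |ω| n c * hamInfPow j |ω| c m :=
      mul_nonneg (hamInf_nonneg (abs_nonneg ω)) (hamInfPow_nonneg (abs_nonneg ω) j c m)
    calc |∑ c : cube d L, hamInf ω n c * (ham d L ω ^ j) c m|
        ≤ ∑ c : cube d L, hamInf |ω| n c * hamInfPow j |ω| c m := by
          refine (abs_sum_le_sum_abs _ _).trans (sum_le_sum fun c _ => ?_)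
          rw [abs_mul, abs_hamInf]
          exact mul_le_mul_of_nonneg_left (ih c) (hamInf_nonneg (abs_nonneg ω))
      _ = ∑ c ∈ cube d L ∩ box (n : Fin d → ℤ) 1, hamInf |ω| n c * hamInfPow j |ω| c m := by
          rw [sum_coe_sort (cube d L) fun c => hamInf |ω| n c * hamInfPow j |ω| c m,
            sum_cube_hamInf_mul]
      _ ≤ ∑ c ∈ box (n : Fin d → ℤ) 1, hamInf |ω| n c * hamInfPow j |ω| c m :=
          sum_le_sum_of_subset_of_nonneg inter_subset_right fun c _ _ => hnn c

lemma dependsOn_hamPow_apply (j : ℕ) (n m : cube d L) :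
    DependsOn (fun ω => (ham d L ω ^ j) n m) (box (n : Fin d → ℤ) j) := by
  induction j generalizing n with
  | zero => exact fun _ _ _ => rfl
  | succ j ih =>
    intro ω ω' h
    simp only [hamPow_succ_apply]
    refine sum_congr rfl fun c _ => ?_
    by_cases hc : (c : Fin d → ℤ) ∈ box (n : Fin d → ℤ) 1
    · exact congrArg₂ (· * ·) (hamInf_congr (h n self_mem_box))
        (ih c fun x hx => h x (box_subset_box hc hx))
    · rw [hamInf_eq_zero hc, hamInf_eq_zero hc, zero_mul, zero_mul]

end FiniteVolume

section DiagonalEntries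

/-- The diagonal entry `P(H^ω_L)_{xx}`, extended by `0` outside `Λ_L`. -/
def diagEntry (L : ℕ) (P : Polynomial ℝ) (x : Fin d → ℤ) (ω : Cfg d) : ℝ :=
  if h : x ∈ cube d L then Polynomial.aeval (ham d L ω) P ⟨x, h⟩ ⟨x, h⟩ else 0

def diagEntryInf (P : Polynomial ℝ) (ω : Cfg d) : ℝ :=
  ∑ j ∈ range (P.natDegree + 1), P.coeff j * hamInfPow j ω 0 0

def diagMajorant (P : Polynomial ℝ) (ω : Cfg d) : ℝ :=
  ∑ j ∈ range (P.natDegree + 1), |P.coeff j| * hamInfPow j |ω| 0 0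

variable {L : ℕ} {P : Polynomial ℝ} {x : Fin d → ℤ} {ω : Cfg d}

lemma diagEntry_of_mem (h : x ∈ cube d L) :
    diagEntry L P x ω =
      ∑ j ∈ range (P.natDegree + 1), P.coeff j * (ham d L ω ^ j) ⟨x, h⟩ ⟨x, h⟩ := by
  rw [diagEntry, dif_pos h, Matrix.aeval_apply]

lemma diagEntryInf_shift :
    diagEntryInf P (shift x ω) = ∑ j ∈ range (P.natDegree + 1), P.coeff j * hamInfPow j ω x x := by
  simp only [diagEntryInf, hamInfPow_shift, zero_add]

lemma diagMajorant_shift :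
    diagMajorant P (shift x ω) =
      ∑ j ∈ range (P.natDegree + 1), |P.coeff j| * hamInfPow j |ω| x x := by
  have h : |shift x ω| = shift x |ω| := rfl
  simp only [diagMajorant, h, hamInfPow_shift, zero_add]

lemma trace_aeval_ham (L : ℕ) (P : Polynomial ℝ) (ω : Cfg d) :
    (Polynomial.aeval (ham d L ω) P).trace = ∑ x ∈ cube d L, diagEntry L P x ω := by
  rw [← sum_coe_sort (cube d L)]
  exact sum_congr rfl fun n _ => by rw [diagEntry, dif_pos n.2]; rfl

lemma diagEntry_eq_diagEntryInf_shift (h : box x P.natDegree ⊆ cube d L) :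
    diagEntry L P x ω = diagEntryInf P (shift x ω) := by
  rw [diagEntry_of_mem (h self_mem_box), diagEntryInf_shift]
  exact sum_congr rfl fun j hj => congrArg _ <|
    hamPow_apply j _ _ ((box_mono (Nat.le_of_lt_succ (mem_range.1 hj))).trans h)

lemma abs_diagEntry_le : |diagEntry L P x ω| ≤ diagMajorant P (shift x ω) := by
  by_cases h : x ∈ cube d L
  · rw [diagEntry_of_mem h, diagMajorant_shift]
    refine (abs_sum_le_sum_abs _ _).trans (sum_le_sum fun j _ => ?_)
    rw [abs_mul]
    exact mul_le_mul_of_nonneg_left (abs_hamPow_apply_le j _ _) (abs_nonneg _)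
  · rw [diagEntry, dif_neg h, abs_zero]
    exact sum_nonneg fun j _ =>
      mul_nonneg (abs_nonneg _) (hamInfPow_nonneg (abs_nonneg _) j 0 0)

lemma dependsOn_diagEntry (L : ℕ) (P : Polynomial ℝ) (x : Fin d → ℤ) :
    DependsOn (diagEntry L P x) (box x P.natDegree) := by
  intro ω ω' hωω'
  by_cases h : x ∈ cube d L
  · rw [diagEntry_of_mem h, diagEntry_of_mem h]
    refine sum_congr rfl fun j hj => congrArg _ <| dependsOn_hamPow_apply j _ _ fun y hy =>
      hωω' y (box_mono (Nat.le_of_lt_succ (mem_range.1 hj)) hy)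
  · rw [diagEntry, diagEntry, dif_neg h, dif_neg h]

variable {Ω : Type*} (S : Subalgebra ℝ (Ω → ℝ)) {V : Ω → Cfg d}

lemma diagEntry_mem (hV : ∀ x, (fun ω => V ω x) ∈ S) (L : ℕ) (P : Polynomial ℝ)
    (x : Fin d → ℤ) : (fun ω => diagEntry L P x (V ω)) ∈ S := by
  by_cases h : x ∈ cube d L
  · simp only [diagEntry, dif_pos h]
    refine Matrix.aeval_apply_mem S (fun n m => ?_) P _ _
    simp only [ham_apply]
    exact hamInf_mem S hV n m
  · simp only [diagEntry, dif_neg h]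
    exact S.zero_mem

lemma diagEntryInf_mem (hV : ∀ x, (fun ω => V ω x) ∈ S) (P : Polynomial ℝ) :
    (fun ω => diagEntryInf P (V ω)) ∈ S := by
  have h : (fun ω => diagEntryInf P (V ω)) =
      ∑ j ∈ range (P.natDegree + 1), P.coeff j • fun ω => hamInfPow j (V ω) 0 0 := by
    ext ω
    simp [diagEntryInf]
  exact h ▸ S.sum_mem fun j _ => S.smul_mem (hamInfPow_mem S hV j 0 0) _

lemma diagMajorant_mem (hV : ∀ x, (fun ω => |V ω x|) ∈ S) (P : Polynomial ℝ) :
    (fun ω => diagMajorant P (V ω)) ∈ S := by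
  have h : (fun ω => diagMajorant P (V ω)) =
      ∑ j ∈ range (P.natDegree + 1), |P.coeff j| • fun ω => hamInfPow j |V ω| 0 0 := by
    ext ω
    simp [diagMajorant]
  exact h ▸ S.sum_mem fun j _ => S.smul_mem (hamInfPow_mem S hV j 0 0) _

end DiagonalEntries

section IID

variable {μ : Measure ℝ} {Pr : Measure (Cfg d)}

lemma IID.eq_infinitePi (hiid : IID d μ Pr) : Pr = Measure.infinitePi fun _ => μ := by
  simpa [hiid.2] using hiid.1.map_fun_eq_infinitePi_map fun x => measurable_pi_apply x

lemma IID.measurePreserving_shift [IsProbabilityMeasure μ] (hiid : IID d μ Pr) (t : Fin d → ℤ) :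
    MeasurePreserving (shift t) Pr Pr := by
  refine ⟨measurable_shift t, ?_⟩
  have h : shift t = MeasurableEquiv.piCongrLeft (fun _ => ℝ) (Equiv.subRight t) := by
    ext ω x
    simp [shift, MeasurableEquiv.coe_piCongrLeft, Equiv.piCongrLeft_apply]
  rw [h, IID.eq_infinitePi hiid]
  exact Measure.infinitePi_map_piCongrLeft (fun _ => μ) (Equiv.subRight t)

lemma IID.coord_mem_finiteMoments [IsProbabilityMeasure Pr] (hiid : IID d μ Pr)
    (hmom : ∀ k : ℕ, Integrable (fun x => |x| ^ k) μ) (x : Fin d → ℤ) :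
    (fun ω => ω x) ∈ finiteMoments Pr := by
  refine ⟨measurable_pi_apply x, fun p => ?_⟩
  have hμ : MemLp id p μ := by
    rcases eq_or_ne p 0 with rfl | hp
    · exact_mod_cast memLp_zero_iff_aestronglyMeasurable.2 (aestronglyMeasurable_id (μ := μ))
    · rw [← integrable_norm_rpow_iff (aestronglyMeasurable_id (μ := μ)) (by simpa) (by simp)]
      simpa [Real.norm_eq_abs] using hmom p
  rw [← hiid.2 x] at hμ
  exact (memLp_map_measure_iff aestronglyMeasurable_id (measurable_pi_apply x).aemeasurable).1 hμ

end IID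

section Covariance

variable {μ : Measure ℝ} {Pr : Measure (Cfg d)} [IsProbabilityMeasure Pr]
  {P : Polynomial ℝ} {L : ℕ} {x y : Fin d → ℤ}

def diagCov (Pr : Measure (Cfg d)) (P : Polynomial ℝ) (z : Fin d → ℤ) : ℝ :=
  cov[diagEntryInf P, fun ω => diagEntryInf P (shift z ω); Pr]

/-- The limit `σ_P²`; `diagCov Pr P z` vanishes for `z ∉ box 0 (2 * P.natDegree)` since the two
entries then depend on disjoint sets of sites. -/
def limitVariance (Pr : Measure (Cfg d)) (P : Polynomial ℝ) : ℝ :=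
  ∑ z ∈ box 0 (2 * P.natDegree), diagCov Pr P z

lemma diagEntry_mem_finiteMoments (hmem : ∀ x, (fun ω => ω x) ∈ finiteMoments Pr) :
    diagEntry L P x ∈ finiteMoments Pr :=
  diagEntry_mem _ hmem L P x

lemma covariance_diagEntry_eq_zero (hiid : IID d μ Pr)
    (hmem : ∀ x, (fun ω => ω x) ∈ finiteMoments Pr) {i : Fin d}
    (hsep : 2 * (P.natDegree : ℤ) < |x i - y i|) :
    cov[diagEntry L P x, diagEntry L P y; Pr] = 0 := by
  have hx : diagEntry L P x ∈ finiteMoments Pr := diagEntry_mem_finiteMoments hmem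
  have hy : diagEntry L P y ∈ finiteMoments Pr := diagEntry_mem_finiteMoments hmem
  refine IndepFun.covariance_eq_zero ?_ (hx.2 2) (hy.2 2)
  exact hiid.1.indepFun_of_dependsOn (disjoint_box (by linarith)) hx.1 hy.1
    (dependsOn_diagEntry L P x) (dependsOn_diagEntry L P y)

lemma covariance_diagEntry_of_box_subset [IsProbabilityMeasure μ] (hiid : IID d μ Pr)
    (hmem : ∀ x, (fun ω => ω x) ∈ finiteMoments Pr)
    (hx : box x P.natDegree ⊆ cube d L) (hy : box y P.natDegree ⊆ cube d L) :
    cov[diagEntry L P x, diagEntry L P y; Pr] = diagCov Pr P (y - x) := by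
  have hF : diagEntryInf P ∈ finiteMoments Pr := diagEntryInf_mem _ hmem P
  have hτ := IID.measurePreserving_shift hiid x
  have hFτ : diagEntryInf P ∘ shift (y - x) ∈ finiteMoments Pr :=
    comp_mem_finiteMoments hF (IID.measurePreserving_shift hiid (y - x))
  have ex : diagEntry L P x = diagEntryInf P ∘ shift x :=
    funext fun ω => diagEntry_eq_diagEntryInf_shift hx
  have ey : diagEntry L P y = (diagEntryInf P ∘ shift (y - x)) ∘ shift x :=
    funext fun ω => by
      rw [diagEntry_eq_diagEntryInf_shift hy, Function.comp_apply, Function.comp_apply,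
        shift_shift, sub_add_cancel]
  rw [ex, ey, ← covariance_map (by rw [hτ.map_eq]; exact hF.1.aestronglyMeasurable)
    (by rw [hτ.map_eq]; exact hFτ.1.aestronglyMeasurable) hτ.measurable.aemeasurable,
    hτ.map_eq]
  rfl

lemma integral_sq_diagEntry_le [IsProbabilityMeasure μ] (hiid : IID d μ Pr)
    (hmem : ∀ x, (fun ω => ω x) ∈ finiteMoments Pr) :
    ∫ ω, diagEntry L P x ω ^ 2 ∂Pr ≤ ∫ ω, diagMajorant P ω ^ 2 ∂Pr := by
  have hτ := IID.measurePreserving_shift hiid x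
  have hM : diagMajorant P ∈ finiteMoments Pr :=
    diagMajorant_mem _ (fun y => abs_mem_finiteMoments (hmem y)) P
  calc ∫ ω, diagEntry L P x ω ^ 2 ∂Pr ≤ ∫ ω, diagMajorant P (shift x ω) ^ 2 ∂Pr := by
        refine integral_mono ((diagEntry_mem_finiteMoments hmem).2 2).integrable_sq
          ((comp_mem_finiteMoments hM hτ).2 2).integrable_sq fun ω => ?_
        rw [← sq_abs]
        exact pow_le_pow_left₀ (abs_nonneg _) abs_diagEntry_le 2
    _ = ∫ ω, diagMajorant P ω ^ 2 ∂Pr := by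
        conv_rhs => rw [← hτ.map_eq]
        exact (integral_map hτ.measurable.aemeasurable
          (hM.1.pow_const 2).aestronglyMeasurable).symm

lemma abs_covariance_diagEntry_le [IsProbabilityMeasure μ] (hiid : IID d μ Pr)
    (hmem : ∀ x, (fun ω => ω x) ∈ finiteMoments Pr) :
    |cov[diagEntry L P x, diagEntry L P y; Pr]| ≤ ∫ ω, diagMajorant P ω ^ 2 ∂Pr := by
  have hx : diagEntry L P x ∈ finiteMoments Pr := diagEntry_mem_finiteMoments hmem
  have hy : diagEntry L P y ∈ finiteMoments Pr := diagEntry_mem_finiteMoments hmem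
  have vx := (variance_le_expectation_sq hx.1.aestronglyMeasurable).trans
    (integral_sq_diagEntry_le (x := x) hiid hmem)
  have vy := (variance_le_expectation_sq hy.1.aestronglyMeasurable).trans
    (integral_sq_diagEntry_le (x := y) hiid hmem)
  linarith [abs_covariance_le (hx.2 2) (hy.2 2)]

lemma sum_covariance_diagEntry_eq_sum_inter (hiid : IID d μ Pr)
    (hmem : ∀ x, (fun ω => ω x) ∈ finiteMoments Pr) (x : Fin d → ℤ) :
    ∑ y ∈ cube d L, cov[diagEntry L P x, diagEntry L P y; Pr] =
      ∑ y ∈ cube d L ∩ box x (2 * P.natDegree), cov[diagEntry L P x, diagEntry L P y; Pr] := by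
  refine (sum_subset inter_subset_left fun y hy hy' => ?_).symm
  obtain ⟨i, hi⟩ : ∃ i, ((2 * P.natDegree : ℕ) : ℤ) < |y i - x i| := by
    simpa [mem_box] using fun h => hy' (mem_inter.2 ⟨hy, h⟩)
  push_cast at hi
  exact covariance_diagEntry_eq_zero hiid hmem (i := i) (by rwa [abs_sub_comm])

lemma sum_covariance_diagEntry_of_box_subset [IsProbabilityMeasure μ] (hiid : IID d μ Pr)
    (hmem : ∀ x, (fun ω => ω x) ∈ finiteMoments Pr) (h : box x (3 * P.natDegree) ⊆ cube d L) :
    ∑ y ∈ cube d L, cov[diagEntry L P x, diagEntry L P y; Pr] = limitVariance Pr P := by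
  rw [sum_covariance_diagEntry_eq_sum_inter hiid hmem,
    inter_eq_right.2 ((box_mono (by omega)).trans h), limitVariance]
  refine sum_nbij' (· - x) (· + x) (fun y hy => sub_mem_box_zero.2 hy)
    (fun z hz => sub_mem_box_zero.1 (by simpa using hz)) (fun y _ => sub_add_cancel y x)
    (fun z _ => add_sub_cancel_right z x) fun y hy => ?_
  exact covariance_diagEntry_of_box_subset hiid hmem ((box_mono (by omega)).trans h)
    ((box_subset_box hy).trans ((box_mono (by omega)).trans h))

lemma abs_sum_covariance_diagEntry_le [IsProbabilityMeasure μ] (hiid : IID d μ Pr)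
    (hmem : ∀ x, (fun ω => ω x) ∈ finiteMoments Pr) (x : Fin d → ℤ) :
    |∑ y ∈ cube d L, cov[diagEntry L P x, diagEntry L P y; Pr]| ≤
      (4 * P.natDegree + 1) ^ d * ∫ ω, diagMajorant P ω ^ 2 ∂Pr := by
  set B := ∫ ω, diagMajorant P ω ^ 2 ∂Pr
  rw [sum_covariance_diagEntry_eq_sum_inter hiid hmem]
  calc _ ≤ ∑ y ∈ cube d L ∩ box x (2 * P.natDegree), B :=
        (abs_sum_le_sum_abs _ _).trans
          (sum_le_sum fun y _ => abs_covariance_diagEntry_le hiid hmem)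
    _ ≤ #(box x (2 * P.natDegree)) * B := by
        rw [sum_const, nsmul_eq_mul]
        exact mul_le_mul_of_nonneg_right (by exact_mod_cast card_le_card inter_subset_right)
          (integral_nonneg fun ω => sq_nonneg _)
    _ = (4 * P.natDegree + 1) ^ d * B := by
        rw [card_box]
        push_cast
        ring

end Covariance

section Variance

variable {Pr : Measure (Cfg d)} [IsProbabilityMeasure Pr]

lemma integral_sq_XPoly (hmem : ∀ x, (fun ω => ω x) ∈ finiteMoments Pr) (L : ℕ)
    (P : Polynomial ℝ) :
    ∫ ω, XPoly d L Pr P ω ^ 2 ∂Pr = (#(cube d L) : ℝ)⁻¹ *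
      ∑ x ∈ cube d L, ∑ y ∈ cube d L, cov[diagEntry L P x, diagEntry L P y; Pr] := by
  have hD (x : Fin d → ℤ) : diagEntry L P x ∈ finiteMoments Pr :=
    diagEntry_mem_finiteMoments hmem
  have hT : Measurable fun ω => ∑ x ∈ cube d L, diagEntry L P x ω :=
    Finset.measurable_sum _ fun x _ => (hD x).1
  simp only [XPoly, trace_aeval_ham, mul_pow, inv_pow, Real.sq_sqrt (Nat.cast_nonneg _),
    integral_const_mul]
  rw [← variance_eq_integral hT.aemeasurable, variance_fun_sum' fun x _ => (hD x).2 2]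

end Variance

end Anderson

end

open Anderson in
theorem variance_converges_poly_general (d : ℕ)
    (μ : Measure ℝ) [IsProbabilityMeasure μ]
    (Pr : Measure (Cfg d)) [IsProbabilityMeasure Pr] (hiid : IID d μ Pr)
    (hmom : ∀ k : ℕ, Integrable (fun x => |x| ^ k) μ)
    (P : Polynomial ℝ) :
    ∃ s : ℝ, Tendsto (fun L : ℕ => ∫ ω, (XPoly d L Pr P ω) ^ 2 ∂Pr) atTop (𝓝 s) := by
  have hmem := IID.coord_mem_finiteMoments hiid hmom
  set k := P.natDegree
  refine ⟨limitVariance Pr P, ?_⟩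
  simp_rw [integral_sq_XPoly hmem]
  refine tendsto_inv_card_mul_sum (t := fun L => cube d (L - 3 * k))
    (fun L => ⟨0, cube_eq_box L ▸ self_mem_box⟩)
    (fun L => by simpa only [cube_eq_box] using box_mono (Nat.sub_le L (3 * k)))
    ?_ (fun L x _ => abs_sum_covariance_diagEntry_le hiid hmem x)
    (tendsto_card_cube_sub_div_card_cube d (3 * k))
  filter_upwards [eventually_ge_atTop (3 * k)] with L hL x hx
  refine sum_covariance_diagEntry_of_box_subset hiid hmem ?_
  rw [cube_eq_box] at hx ⊢
  simpa [Nat.add_sub_cancel' hL] using box_subset_box (q := 3 * k) hx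

/-- for polynomial test functions the normalized variances
`E[|X_{P,L}|²] = |Λ_L|⁻¹ Var(Tr P(H^ω_L))` actually converge. -/
theorem variance_converges_poly (d : ℕ) (hd : 1 ≤ d)
    (μ : Measure ℝ) [IsProbabilityMeasure μ]
    (Pr : Measure (Cfg d)) [IsProbabilityMeasure Pr] (hiid : IID d μ Pr)
    (hmom : ∀ k : ℕ, Integrable (fun x => |x| ^ k) μ)
    (P : Polynomial ℝ) (hdeg : 1 ≤ P.natDegree) :
    ∃ s : ℝ, Tendsto (fun L : ℕ => ∫ ω, (XPoly d L Pr P ω) ^ 2 ∂Pr) atTop (𝓝 s) :=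
  variance_converges_poly_general d μ Pr hiid hmom P
end

section
/- Let T be an m × m Hermitian matrix, let j ∈ {1,...,m}, and for λ ∈ ℝ let T_λ = T + λ 𝒫_j, where 𝒫_j is the orthogonal projection onto the span of the j-th standard basis vector δ_j (i.e., the matrix with a single 1 in position (j,j)). Then for every f ∈ C¹(ℝ) (f differentiable with continuous derivative), the function λ ↦ Tr f(T_λ) is differentiable on ℝ and its derivative at λ equals ⟨f'(T_λ) δ_j, δ_j⟩, the (j,j) entry of f'(T_λ). -/
/-!
For a polynomial `q`, expanding powers and using cyclicity of the trace gives
`d/dt Tr q(T + t𝒫_j) = Tr (q'(T_t) 𝒫_j) = q'(T_t)_{jj}`. For `t` near `λ` the spectra of `T_t`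
stay in a fixed interval `[-K, K]`, on which polynomials `q_n` approximate `f` in `C¹`
(Weierstrass applied to `f'`, then integrated). Since `g(A)_{jj}` is an average of `g` over the
eigenvalues of `A`, the derivatives `q_n'(T_t)_{jj}` converge uniformly in `t`, the traces converge
pointwise, and the derivative passes to the limit.
-/

noncomputable section

/-- Continuous functional calculus for Hermitian matrices:
`f(A) = Σ_i f(λ_i) ψ_i ψ_i^*` in an orthonormal eigenbasis (junk value `0` if `A` is not
Hermitian). -/
def matFCC {N : Type*} [Fintype N] [DecidableEq N] (f : ℝ → ℝ) (A : Matrix N N ℂ) :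
    Matrix N N ℂ :=
  if hA : A.IsHermitian then
    Matrix.of fun n m =>
      ∑ i, (f (hA.eigenvalues i) : ℂ) * hA.eigenvectorBasis i n * star (hA.eigenvectorBasis i m)
  else 0

open Matrix Polynomial Filter Set Topology

theorem Polynomial.derivative_surjective {K : Type*} [Field K] [CharZero K] :
    Function.Surjective (derivative : K[X] →ₗ[K] K[X]) := by
  intro p
  induction p using Polynomial.induction_on' with
  | add p r hp hr =>
    obtain ⟨a, rfl⟩ := hp
    obtain ⟨b, rfl⟩ := hr
    exact ⟨a + b, map_add _ _ _⟩
  | monomial n a =>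
    refine ⟨monomial (n + 1) (a / (n + 1)), ?_⟩
    rw [derivative_monomial, Nat.add_sub_cancel]
    congr 1
    push_cast
    field_simp

section PolynomialApproximation

variable {f f' : ℝ → ℝ} {a b : ℝ}

theorem exists_polynomial_near_of_hasDerivWithinAt
    (hf : ∀ x ∈ Icc a b, HasDerivWithinAt f (f' x) (Icc a b) x) (hf' : ContinuousOn f' (Icc a b))
    {ε : ℝ} (hε : 0 < ε) :
    ∃ q : ℝ[X], ∀ x ∈ Icc a b,
      |q.derivative.eval x - f' x| < ε ∧ |q.eval x - f x| ≤ ε * (b - a) := by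
  obtain ⟨p, hp⟩ := exists_polynomial_near_of_continuousOn a b f' hf' ε hε
  obtain ⟨r, hr⟩ := derivative_surjective p
  set q := r + C (f a - r.eval a)
  have hq : q.derivative = p := by simp [q, ← hr]
  refine ⟨q, fun x hx => ⟨hq ▸ hp x hx, ?_⟩⟩
  have hab : a ≤ b := hx.1.trans hx.2
  have hmv := (convex_Icc a b).norm_image_sub_le_of_norm_hasDerivWithin_le
    (f := fun y => q.eval y - f y) (C := ε)
    (fun y hy => (q.hasDerivAt y).hasDerivWithinAt.sub (hf y hy))
    (fun y hy => by rw [hq, Real.norm_eq_abs]; exact (hp y hy).le) (left_mem_Icc.2 hab) hx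
  have hqa : q.eval a - f a = 0 := by simp [q]
  simp only [hqa, sub_zero, Real.norm_eq_abs] at hmv
  refine hmv.trans (mul_le_mul_of_nonneg_left ?_ hε.le)
  rw [abs_of_nonneg (sub_nonneg.2 hx.1)]
  linarith [hx.2]

theorem exists_polynomial_tendstoUniformlyOn_of_hasDerivWithinAt
    (hf : ∀ x ∈ Icc a b, HasDerivWithinAt f (f' x) (Icc a b) x) (hf' : ContinuousOn f' (Icc a b)) :
    ∃ q : ℕ → ℝ[X], TendstoUniformlyOn (fun n x => (q n).eval x) f atTop (Icc a b) ∧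
      TendstoUniformlyOn (fun n x => (q n).derivative.eval x) f' atTop (Icc a b) := by
  choose q hq using fun n : ℕ =>
    exists_polynomial_near_of_hasDerivWithinAt hf hf' (Nat.one_div_pos_of_nat (n := n))
  have hδ : Tendsto (fun n : ℕ => 1 / ((n : ℝ) + 1)) atTop (𝓝 0) :=
    tendsto_one_div_add_atTop_nhds_zero_nat
  refine ⟨q, ?_, ?_⟩ <;> rw [Metric.tendstoUniformlyOn_iff] <;> intro ε hε
  · have hδ' := hδ.mul_const (b - a)
    rw [zero_mul] at hδ'
    filter_upwards [(tendsto_order.1 hδ').2 ε hε] with n hn x hx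
    rw [dist_comm, Real.dist_eq]
    exact (hq n x hx).2.trans_lt hn
  · filter_upwards [(tendsto_order.1 hδ).2 ε hε] with n hn x hx
    rw [dist_comm, Real.dist_eq]
    exact (hq n x hx).1.trans hn

end PolynomialApproximation

namespace Matrix.IsHermitian

variable {N : Type*} [Fintype N] [DecidableEq N] {A : Matrix N N ℂ} (hA : A.IsHermitian)
include hA

theorem matFCC_eq_cfc (f : ℝ → ℝ) : matFCC f A = cfc f A := by
  rw [hA.cfc_eq, matFCC, dif_pos hA, IsHermitian.cfc, Unitary.conjStarAlgAut_apply]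
  ext n m
  simp [Matrix.mul_apply, Matrix.diagonal_apply, mul_comm]

theorem matFCC_eval (q : ℝ[X]) : matFCC (fun x => q.eval x) A = aeval A q := by
  rw [hA.matFCC_eq_cfc]
  exact cfc_polynomial q A hA

theorem trace_matFCC (f : ℝ → ℝ) :
    (matFCC f A).trace = ((∑ i, f (hA.eigenvalues i) : ℝ) : ℂ) := by
  rw [hA.matFCC_eq_cfc, hA.cfc_eq, IsHermitian.cfc, Unitary.conjStarAlgAut_apply,
    trace_mul_cycle, Unitary.coe_star_mul_self, one_mul, trace_diagonal]
  push_cast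
  rfl

theorem matFCC_apply_self (f : ℝ → ℝ) (j : N) :
    matFCC f A j j = ((∑ i, f (hA.eigenvalues i) * ‖hA.eigenvectorBasis i j‖ ^ 2 : ℝ) : ℂ) := by
  rw [matFCC, dif_pos hA]
  push_cast
  refine Finset.sum_congr rfl fun i _ => ?_
  rw [mul_assoc, RCLike.star_def, RCLike.mul_conj]
  rfl

theorem sum_norm_eigenvectorBasis_apply_sq (j : N) :
    ∑ i, ‖hA.eigenvectorBasis i j‖ ^ 2 = 1 := by
  have h := congr_fun₂ (Unitary.coe_mul_star_self hA.eigenvectorUnitary) j j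
  simp only [Matrix.mul_apply, Unitary.coe_star, star_eq_conjTranspose, conjTranspose_apply,
    eigenvectorUnitary_apply, RCLike.star_def, RCLike.mul_conj, one_apply_eq] at h
  exact RCLike.ofReal_injective (K := ℂ) (by simpa using h)

theorem dist_matFCC_apply_self_le {f g : ℝ → ℝ} {ε : ℝ}
    (h : ∀ x ∈ spectrum ℝ A, dist (f x) (g x) ≤ ε) (j : N) :
    dist (matFCC f A j j) (matFCC g A j j) ≤ ε := by
  rw [hA.matFCC_apply_self, hA.matFCC_apply_self, Complex.isometry_ofReal.dist_eq, Real.dist_eq,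
    ← Finset.sum_sub_distrib]
  calc |∑ i, (f (hA.eigenvalues i) * ‖hA.eigenvectorBasis i j‖ ^ 2
          - g (hA.eigenvalues i) * ‖hA.eigenvectorBasis i j‖ ^ 2)|
      ≤ ∑ i, |f (hA.eigenvalues i) - g (hA.eigenvalues i)| * ‖hA.eigenvectorBasis i j‖ ^ 2 := by
        refine (Finset.abs_sum_le_sum_abs _ _).trans_eq (Finset.sum_congr rfl fun i _ => ?_)
        rw [← sub_mul, abs_mul, abs_sq]
    _ ≤ ∑ i, ε * ‖hA.eigenvectorBasis i j‖ ^ 2 := by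
        gcongr with i
        exact h _ (hA.eigenvalues_mem_spectrum_real i)
    _ = ε := by rw [← Finset.mul_sum, hA.sum_norm_eigenvectorBasis_apply_sq, mul_one]

theorem tendsto_trace_matFCC {ι : Type*} {p : Filter ι} {F : ι → ℝ → ℝ} {f : ℝ → ℝ}
    (hF : ∀ x ∈ spectrum ℝ A, Tendsto (fun n => F n x) p (𝓝 (f x))) :
    Tendsto (fun n => (matFCC (F n) A).trace) p (𝓝 (matFCC f A).trace) := by
  simp only [hA.trace_matFCC]
  exact (Complex.continuous_ofReal.tendsto _).comp
    (tendsto_finsetSum _ fun i _ => hF _ (hA.eigenvalues_mem_spectrum_real i))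

end Matrix.IsHermitian

theorem TendstoUniformlyOn.matFCC_apply_self {N ι α : Type*} [Fintype N] [DecidableEq N]
    {p : Filter ι} {F : ι → ℝ → ℝ} {f : ℝ → ℝ} {s : Set ℝ} (hF : TendstoUniformlyOn F f p s)
    {A : α → Matrix N N ℂ} {S : Set α} (hA : ∀ x ∈ S, (A x).IsHermitian)
    (hs : ∀ x ∈ S, spectrum ℝ (A x) ⊆ s) (j : N) :
    TendstoUniformlyOn (fun n x => matFCC (F n) (A x) j j) (fun x => matFCC f (A x) j j) p S := by
  rw [Metric.tendstoUniformlyOn_iff] at hF ⊢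
  intro ε hε
  filter_upwards [hF (ε / 2) (half_pos hε)] with n hn x hx
  exact ((hA x hx).dist_matFCC_apply_self_le (fun y hy => (hn y (hs x hx hy)).le) j).trans_lt
    (half_lt_self hε)

section LinftyOpNorm

attribute [local instance] Matrix.linftyOpNormedRing Matrix.linftyOpNormedAlgebra

variable {N 𝕜 : Type*} [Fintype N] [DecidableEq N] [RCLike 𝕜]

theorem exists_spectrum_subset_Icc_of_continuousOn {α : Type*} [TopologicalSpace α]
    {A : α → Matrix N N 𝕜} {S : Set α} (hS : IsCompact S) (hA : ContinuousOn A S) :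
    ∃ K, ∀ x ∈ S, spectrum ℝ (A x) ⊆ Icc (-K) K := by
  obtain ⟨C, hC⟩ := hS.exists_bound_of_continuousOn hA
  refine ⟨C * ‖(1 : Matrix N N 𝕜)‖, fun x hx k hk => abs_le.1 ?_⟩
  rw [← Real.norm_eq_abs]
  exact (spectrum.norm_le_norm_mul_of_mem hk).trans
    (mul_le_mul_of_nonneg_right (hC x hx) (norm_nonneg _))

variable {F : ℝ → Matrix N N 𝕜} {Q : Matrix N N 𝕜} {t : ℝ}

theorem HasDerivAt.trace (hF : HasDerivAt F Q t) : HasDerivAt (fun s => (F s).trace) Q.trace t :=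
  (traceLinearMap N ℝ 𝕜).toContinuousLinearMap.hasFDerivAt.comp_hasDerivAt t hF

theorem HasDerivAt.trace_pow (hF : HasDerivAt F Q t) (n : ℕ) :
    HasDerivAt (fun s => (F s ^ n).trace) (n • (F t ^ (n - 1) * Q).trace) t := by
  refine (hF.fun_pow' n).trace.congr_deriv ?_
  rw [trace_sum, Finset.sum_congr rfl (g := fun _ => (F t ^ (n - 1) * Q).trace), Finset.sum_const,
    Finset.card_range]
  intro i hi
  rw [trace_mul_cycle, ← pow_add, Nat.pred_eq_sub_one,
    Nat.add_sub_cancel' (Nat.le_sub_one_of_lt (Finset.mem_range.1 hi))]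

theorem HasDerivAt.trace_aeval (hF : HasDerivAt F Q t) (q : ℝ[X]) :
    HasDerivAt (fun s => (aeval (F s) q).trace) ((aeval (F t) (derivative q) * Q).trace) t := by
  induction q using Polynomial.induction_on' with
  | add p r hp hr =>
    simpa only [map_add, trace_add, add_mul] using hp.fun_add hr
  | monomial n a =>
    simp only [aeval_monomial, derivative_monomial, ← Algebra.smul_def, trace_smul, smul_mul_assoc]
    refine ((hF.trace_pow n).fun_const_smul a).congr_deriv ?_
    rw [mul_smul, Nat.cast_smul_eq_nsmul]

theorem hasDerivAt_add_ofReal_smul (T P : Matrix N N 𝕜) (t : ℝ) :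
    HasDerivAt (fun s : ℝ => T + (s : 𝕜) • P) P t := by
  have h := ((hasDerivAt_id t).smul_const P).const_add T
  simp only [id_eq, RCLike.real_smul_eq_coe_smul (K := 𝕜), RCLike.ofReal_one, one_smul] at h
  exact h

end LinftyOpNorm

/-- derivative of the trace of `f(T + λ𝒫_j)` under a rank-one diagonal
perturbation: `d/dλ Tr f(T_λ) = (f'(T_λ))_{jj}`. -/
theorem hasDerivAt_trace_fc (m : ℕ) (T : Matrix (Fin m) (Fin m) ℂ) (hT : T.IsHermitian)
    (j : Fin m) (f : ℝ → ℝ) (hf : Differentiable ℝ f) (hf' : Continuous (deriv f)) (l : ℝ) :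
    HasDerivAt
      (fun t : ℝ => (matFCC f (T + (t : ℂ) • Matrix.single j j (1 : ℂ))).trace)
      ((matFCC (deriv f) (T + (l : ℂ) • Matrix.single j j (1 : ℂ))) j j) l := by
  set A : ℝ → Matrix (Fin m) (Fin m) ℂ := fun t => T + (t : ℂ) • Matrix.single j j 1
  have hA (t : ℝ) : (A t).IsHermitian :=
    hT.add <| IsHermitian.smul (by simp [IsHermitian, conjTranspose_single]) (Complex.conj_ofReal t)
  obtain ⟨K, hK⟩ := exists_spectrum_subset_Icc_of_continuousOn (isCompact_closedBall l 1)
    (by fun_prop : Continuous A).continuousOn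
  obtain ⟨q, hq, hq'⟩ := exists_polynomial_tendstoUniformlyOn_of_hasDerivWithinAt
    (fun x _ => (hf x).hasDerivAt.hasDerivWithinAt) hf'.continuousOn (a := -K) (b := K)
  have hKball (t : ℝ) (ht : t ∈ Metric.ball l 1) := hK t (Metric.ball_subset_closedBall ht)
  refine hasDerivAt_of_tendstoUniformlyOn (f := fun n t => (aeval (A t) (q n)).trace)
    Metric.isOpen_ball (hq'.matFCC_apply_self (fun t _ => hA t) hKball j) ?_ ?_
    (Metric.mem_ball_self one_pos)
  · refine Eventually.of_forall fun n t _ => ?_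
    refine ((hasDerivAt_add_ofReal_smul T (single j j 1) t).trace_aeval (q n)).congr_deriv ?_
    rw [(hA t).matFCC_eval, trace_mul_single, MulOpposite.op_one, one_smul]
    rfl
  · intro t ht
    simpa only [(hA t).matFCC_eval] using
      (hA t).tendsto_trace_matFCC fun x hx => hq.tendsto_at (hKball t ht hx)

end
end

section
/- Let (x_{n,m})_{n,m∈ℕ} be a double sequence of nonnegative real numbers such that limsup_{n→∞} limsup_{m→∞} x_{n,m} < ∞. Then there exists a strictly increasing sequence (m_n)_{n∈ℕ} of natural numbers with m_n > n² for all n, such that limsup_{n→∞} x_{n,m_n} ≤ limsup_{n→∞} limsup_{m→∞} x_{n,m}. -/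
open Filter

open scoped ENNReal

theorem ENNReal.eventually_le_limsup_add {α : Type*} {f : Filter α} (u : α → ℝ≥0∞)
    {ε : ℝ≥0∞} (hε : ε ≠ 0) : ∀ᶠ a in f, u a ≤ f.limsup u + ε := by
  rcases eq_or_ne (f.limsup u) ⊤ with htop | hfin
  · simp [htop]
  · exact (eventually_lt_of_limsup_lt (ENNReal.lt_add_right hfin hε)).mono fun _ => le_of_lt

/-- The errors `(n : ℝ≥0∞)⁻¹` allowed on row `n` tend to `0`, so they disappear in the
outer `limsup`. -/
theorem ENNReal.exists_strictMono_limsup_diagonal_le (u : ℕ → ℕ → ℝ≥0∞) (g : ℕ → ℕ) :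
    ∃ ms : ℕ → ℕ, StrictMono ms ∧ (∀ n, g n < ms n) ∧
      limsup (fun n => u n (ms n)) atTop ≤
        limsup (fun n => limsup (fun m => u n m) atTop) atTop := by
  set L : ℕ → ℝ≥0∞ := fun n => limsup (fun m => u n m) atTop
  have hrow : ∀ n, ∀ᶠ m in atTop, g n < m ∧ u n m ≤ L n + (n : ℝ≥0∞)⁻¹ := fun n =>
    (eventually_gt_atTop (g n)).and
      (ENNReal.eventually_le_limsup_add (u n) (ENNReal.inv_ne_zero.2 (ENNReal.natCast_ne_top n)))
  obtain ⟨ms, hmono, hms⟩ := extraction_forall_of_eventually hrow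
  refine ⟨ms, hmono, fun n => (hms n).1, ?_⟩
  calc limsup (fun n => u n (ms n)) atTop
      ≤ limsup (L + fun n : ℕ => (n : ℝ≥0∞)⁻¹) atTop :=
        limsup_le_limsup (.of_forall fun n => (hms n).2)
    _ = limsup L atTop :=
        ENNReal.limsup_add_of_right_tendsto_zero ENNReal.tendsto_inv_nat_nhds_zero L

theorem limsup_diagonal_subsequence_general (x : ℕ → ℕ → ℝ) :
    ∃ ms : ℕ → ℕ, StrictMono ms ∧ (∀ n, n ^ 2 < ms n) ∧
      limsup (fun n => (ENNReal.ofReal (x n (ms n)))) atTop ≤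
        limsup (fun n => limsup (fun m => (ENNReal.ofReal (x n m))) atTop) atTop :=
  ENNReal.exists_strictMono_limsup_diagonal_le (fun n m => ENNReal.ofReal (x n m)) (· ^ 2)

/-- diagonal subsequence along which the iterated `limsup` of a nonnegative
double sequence is not exceeded, with `m_n > n²`. -/
theorem limsup_diagonal_subsequence (x : ℕ → ℕ → ℝ) (hx : ∀ n m, 0 ≤ x n m)
    (hbd : limsup (fun n => limsup (fun m => (ENNReal.ofReal (x n m))) atTop) atTop < ⊤) :
    ∃ ms : ℕ → ℕ, StrictMono ms ∧ (∀ n, n ^ 2 < ms n) ∧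
      limsup (fun n => (ENNReal.ofReal (x n (ms n)))) atTop ≤
        limsup (fun n => limsup (fun m => (ENNReal.ofReal (x n m))) atTop) atTop :=
  limsup_diagonal_subsequence_general x
end

section
/- Let Λ be a finite index set and (X_n)_{n∈Λ} an independent family of real-valued random variables on a probability space (Ω, F, ℙ). For S ⊆ Λ write F_S = σ(X_n : n ∈ S). Let g : ℝ^Λ → ℝ be measurable with g(X) integrable, where X = (X_n)_{n∈Λ}. Then for all subsets A, B ⊆ Λ, almost surely E( E( g(X) | F_A ) | F_B ) = E( g(X) | F_{A∩B} ). -/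
/-!
Split `F_B = F_{A ∩ B} ⊔ F_{B \ A}`. The inner conditional expectation is `F_A`-measurable and
`F_A` is independent of `F_{B \ A}` (the index sets are disjoint), so further conditioning on
`F_{A ∩ B} ⊔ F_{B \ A}` is the same as conditioning on `F_{A ∩ B} ≤ F_A` alone: both sides have the
same integrals over the π-system of sets `s ∩ t`, `s ∈ F_{A ∩ B}`, `t ∈ F_{B \ A}`, by
independence. The tower property finishes the proof.
-/

open MeasureTheory ProbabilityTheory MeasurableSpace Set

section

variable {Ω : Type*}

theorem isPiSystem_image2_inter {C D : Set (Set Ω)} (hC : IsPiSystem C) (hD : IsPiSystem D) :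
    IsPiSystem (image2 (· ∩ ·) C D) := by
  rintro _ ⟨s₁, hs₁, s₂, hs₂, rfl⟩ _ ⟨t₁, ht₁, t₂, ht₂, rfl⟩ hne
  rw [inter_inter_inter_comm] at hne ⊢
  exact mem_image2_of_mem (hC _ hs₁ _ ht₁ hne.left) (hD _ hs₂ _ ht₂ hne.right)

theorem MeasurableSpace.sup_eq_generateFrom_image2_inter (m₁ m₂ : MeasurableSpace Ω) :
    m₁ ⊔ m₂ = generateFrom (image2 (· ∩ ·) {s | MeasurableSet[m₁] s} {t | MeasurableSet[m₂] t}) := by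
  refine le_antisymm (sup_le ?_ ?_) (generateFrom_le ?_)
  · exact fun s hs => measurableSet_generateFrom ⟨s, hs, univ, .univ, inter_univ s⟩
  · exact fun t ht => measurableSet_generateFrom ⟨univ, .univ, t, ht, univ_inter t⟩
  · rintro _ ⟨s, hs, t, ht, rfl⟩
    exact (le_sup_left (b := m₂) s hs).inter (le_sup_right (a := m₁) t ht)

variable {m m' m₁ m₂ mΩ : MeasurableSpace Ω} {μ : Measure Ω}

theorem setIntegral_eq_of_isPiSystem {S : Set (Set Ω)} {f g : Ω → ℝ} (hm : m ≤ mΩ)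
    (h_gen : m = generateFrom S) (hS : IsPiSystem S) (hf : Integrable f μ) (hg : Integrable g μ)
    (h_univ : ∫ x, f x ∂μ = ∫ x, g x ∂μ) (h_basic : ∀ t ∈ S, ∫ x in t, f x ∂μ = ∫ x in t, g x ∂μ)
    {t : Set Ω} (ht : MeasurableSet[m] t) : ∫ x in t, f x ∂μ = ∫ x in t, g x ∂μ := by
  induction t, ht using induction_on_inter h_gen hS with
  | empty => simp
  | basic t ht => exact h_basic t ht
  | compl t ht ih =>
    have hf_add := integral_add_compl (hm t ht) hf
    have hg_add := integral_add_compl (hm t ht) hg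
    linarith
  | iUnion t hdisj ht ih =>
    rw [integral_iUnion (fun i => hm _ (ht i)) hdisj hf.integrableOn,
      integral_iUnion (fun i => hm _ (ht i)) hdisj hg.integrableOn]
    exact tsum_congr ih

theorem setIntegral_inter_eq_measureReal_mul_of_indep {f : Ω → ℝ}
    {s₁ s₂ : Set Ω} (hm' : m' ≤ mΩ) (hm₂ : m₂ ≤ mΩ) (hindep : Indep m' m₂ μ)
    (hf : StronglyMeasurable[m'] f) (hs₁ : MeasurableSet[m'] s₁) (hs₂ : MeasurableSet[m₂] s₂) :
    ∫ x in s₁ ∩ s₂, f x ∂μ = μ.real s₂ * ∫ x in s₁, f x ∂μ := by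
  have hF : StronglyMeasurable[m'] (s₁.indicator f) := hf.indicator hs₁
  calc ∫ x in s₁ ∩ s₂, f x ∂μ = ∫ x in s₂, s₁.indicator f x ∂μ := by
        rw [setIntegral_indicator (hm' _ hs₁), inter_comm]
    _ = μ.real s₂ * ∫ x, s₁.indicator f x ∂μ :=
        Indep.setIntegral_eq_mul (f := id) hm₂
          (indep_of_indep_of_le_right hindep.symm hF.measurable.comap_le)
          (hF.mono hm').measurable.aemeasurable hs₂ aestronglyMeasurable_id
    _ = μ.real s₂ * ∫ x in s₁, f x ∂μ := by rw [integral_indicator (hm' _ hs₁)]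

theorem condExp_sup_eq_condExp_of_indep [IsFiniteMeasure μ] {f : Ω → ℝ} (hm₁ : m₁ ≤ m')
    (hm' : m' ≤ mΩ) (hm₂ : m₂ ≤ mΩ) (hf : StronglyMeasurable[m'] f) (hindep : Indep m' m₂ μ) :
    μ[f | m₁ ⊔ m₂] =ᵐ[μ] μ[f | m₁] := by
  by_cases hfint : Integrable f μ
  swap
  · simp only [condExp_of_not_integrable hfint]
    rfl
  have hm₁₂ : m₁ ⊔ m₂ ≤ mΩ := sup_le (hm₁.trans hm') hm₂
  have h_basic : ∀ t ∈ image2 (· ∩ ·) {s | MeasurableSet[m₁] s} {s | MeasurableSet[m₂] s},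
      ∫ x in t, μ[f | m₁] x ∂μ = ∫ x in t, f x ∂μ := by
    rintro _ ⟨s₁, hs₁, s₂, hs₂, rfl⟩
    rw [setIntegral_inter_eq_measureReal_mul_of_indep hm' hm₂ hindep
        (stronglyMeasurable_condExp.mono hm₁) (hm₁ _ hs₁) hs₂,
      setIntegral_inter_eq_measureReal_mul_of_indep hm' hm₂ hindep hf (hm₁ _ hs₁) hs₂,
      setIntegral_condExp (hm₁.trans hm') hfint hs₁]
  have h_setIntegral {t : Set Ω} (ht : MeasurableSet[m₁ ⊔ m₂] t) :
      ∫ x in t, μ[f | m₁] x ∂μ = ∫ x in t, f x ∂μ :=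
    setIntegral_eq_of_isPiSystem hm₁₂ (sup_eq_generateFrom_image2_inter m₁ m₂)
      (isPiSystem_image2_inter (@isPiSystem_measurableSet Ω m₁) (@isPiSystem_measurableSet Ω m₂))
      integrable_condExp hfint (integral_condExp (hm₁.trans hm')) h_basic ht
  exact (ae_eq_condExp_of_forall_setIntegral_eq hm₁₂ hfint
    (fun _ _ _ => integrable_condExp.integrableOn) (fun _ ht _ => h_setIntegral ht)
    (stronglyMeasurable_condExp.mono (le_sup_left : m₁ ≤ m₁ ⊔ m₂)).aestronglyMeasurable).symm

theorem ProbabilityTheory.iIndep.condExp_condExp_biSup [IsFiniteMeasure μ] {ι : Type*}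
    {m : ι → MeasurableSpace Ω} (hm : ∀ i, m i ≤ mΩ) (hindep : iIndep m μ) (f : Ω → ℝ)
    (A B : Set ι) :
    μ[μ[f | ⨆ i ∈ A, m i] | ⨆ i ∈ B, m i] =ᵐ[μ] μ[f | ⨆ i ∈ A ∩ B, m i] := by
  have hle (S : Set ι) : ⨆ i ∈ S, m i ≤ mΩ := iSup₂_le fun i _ => hm i
  have hB : ⨆ i ∈ B, m i = (⨆ i ∈ A ∩ B, m i) ⊔ ⨆ i ∈ B \ A, m i := by
    rw [← iSup_union, inter_comm, inter_union_sdiff]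
  have hAB : ⨆ i ∈ A ∩ B, m i ≤ ⨆ i ∈ A, m i := biSup_mono inter_subset_left
  calc μ[μ[f | ⨆ i ∈ A, m i] | ⨆ i ∈ B, m i]
      = μ[μ[f | ⨆ i ∈ A, m i] | (⨆ i ∈ A ∩ B, m i) ⊔ ⨆ i ∈ B \ A, m i] := by rw [hB]
    _ =ᵐ[μ] μ[μ[f | ⨆ i ∈ A, m i] | ⨆ i ∈ A ∩ B, m i] :=
        condExp_sup_eq_condExp_of_indep hAB (hle A) (hle (B \ A)) stronglyMeasurable_condExp
          (indep_iSup_of_disjoint hm hindep disjoint_sdiff_self_right)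
    _ =ᵐ[μ] μ[f | ⨆ i ∈ A ∩ B, m i] := condExp_condExp_of_le hAB (hle A)

end

theorem condexp_condexp_indep_general
    {Ω : Type*} [MeasurableSpace Ω] (Pr : Measure Ω) [IsProbabilityMeasure Pr]
    {Λ : Type*} (X : Λ → Ω → ℝ) (hXmeas : ∀ n, Measurable (X n))
    (hindep : iIndepFun X Pr)
    (g : (Λ → ℝ) → ℝ) (A B : Set Λ) :
    Pr[Pr[(fun ω => g (fun n => X n ω)) |
        ⨆ n ∈ A, MeasurableSpace.comap (X n) inferInstance] |
        ⨆ n ∈ B, MeasurableSpace.comap (X n) inferInstance] =ᵐ[Pr]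
      Pr[(fun ω => g (fun n => X n ω)) |
        ⨆ n ∈ A ∩ B, MeasurableSpace.comap (X n) inferInstance] :=
  hindep.iIndep.condExp_condExp_biSup (fun n => (hXmeas n).comap_le) _ A B

/-- for an independent family `(X_n)_{n ∈ Λ}` and `F_S = σ(X_n : n ∈ S)`,
iterated conditional expectations compose as
`E(E(g(X) | F_A) | F_B) = E(g(X) | F_{A ∩ B})` a.s. -/
theorem condexp_condexp_indep
    {Ω : Type*} [MeasurableSpace Ω] (Pr : Measure Ω) [IsProbabilityMeasure Pr]
    {Λ : Type*} [Fintype Λ] (X : Λ → Ω → ℝ) (hXmeas : ∀ n, Measurable (X n))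
    (hindep : iIndepFun X Pr)
    (g : (Λ → ℝ) → ℝ) (hg : Measurable g)
    (hint : Integrable (fun ω => g (fun n => X n ω)) Pr) (A B : Set Λ) :
    Pr[Pr[(fun ω => g (fun n => X n ω)) |
        ⨆ n ∈ A, MeasurableSpace.comap (X n) inferInstance] |
        ⨆ n ∈ B, MeasurableSpace.comap (X n) inferInstance] =ᵐ[Pr]
      Pr[(fun ω => g (fun n => X n ω)) |
        ⨆ n ∈ A ∩ B, MeasurableSpace.comap (X n) inferInstance] :=
  condexp_condexp_indep_general Pr X hXmeas hindep g A B
end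

section
/- Under Hypothesis (M), for all p, k ∈ ℕ and all L ∈ ℕ, the k-th moment of the modified finite-volume measure obeys | (1/|Λ_L|) Σ_{n∈Λ_L} ∫₀¹ E[ ω_n^{2p} · ( (H^ω_L|_{ω_n→uω_n})^k )_{nn} ] du | ≤ (2d+1)^k C^k a^{k+2p} (k+2p)^{k+2p}. -/
open MeasureTheory ProbabilityTheory Filter Topology

/-!
Write `H = A + diag(v)` with `A` the adjacency matrix of the cube and `|v| ≤ |ω|` (the site `n`
carries `u ω_n`). Then `|(H^k)_{nn}|` is at most the `n`-th row sum of `(A + diag|ω|)^k`, which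
expands over the at most `(2d+1)^k` lazy walks of length `k` from `n` into monomials of degree
`≤ k` in the `|ω_s|`. After multiplication by `|ω_n|^{2p}` every monomial has degree
`M ≤ k + 2p`, so by AM-GM its expectation is at most the `M`-th absolute moment of `μ`, and
Hypothesis (M) bounds these moments by `C a^{k+2p} (k+2p)^{k+2p}`.
-/

open Matrix

theorem abs_inv_card_mul_sum_le {α : Type*} (s : Finset α) (f : α → ℝ) {V : ℝ} (hV : 0 ≤ V)
    (hf : ∀ i ∈ s, |f i| ≤ V) : |(s.card : ℝ)⁻¹ * ∑ i ∈ s, f i| ≤ V := by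
  rcases s.eq_empty_or_nonempty with rfl | hs
  · simpa using hV
  have hcard : (0 : ℝ) < s.card := by exact_mod_cast hs.card_pos
  rw [abs_mul, abs_inv, Nat.abs_cast, inv_mul_le_iff₀ hcard]
  calc |∑ i ∈ s, f i| ≤ ∑ i ∈ s, |f i| := Finset.abs_sum_le_sum_abs _ _
    _ ≤ s.card * V := by simpa using Finset.sum_le_sum hf

theorem abs_setIntegral_Icc_zero_one_le {f : ℝ → ℝ} {V : ℝ}
    (hf : ∀ u ∈ Set.Icc (0 : ℝ) 1, |f u| ≤ V) :
    |∫ u in Set.Icc (0 : ℝ) 1, f u| ≤ V := by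
  simpa using norm_setIntegral_le_of_norm_le_const (μ := volume) measure_Icc_lt_top fun u hu =>
    (Real.norm_eq_abs (f u)).trans_le (hf u hu)

theorem integral_abs_pow_le_of_le {μ : Measure ℝ} {C a : ℝ} (hC : 0 ≤ C) (ha : 1 ≤ a)
    (hmom : ∀ k : ℕ, ∫ x, |x| ^ k ∂μ ≤ C * a ^ k * (k : ℝ) ^ k) {M K : ℕ} (hMK : M ≤ K) :
    ∫ x, |x| ^ M ∂μ ≤ C * a ^ K * (K : ℝ) ^ K := by
  refine (hmom M).trans ?_
  have hpow : (M : ℝ) ^ M ≤ (K : ℝ) ^ K := by exact_mod_cast Nat.pow_self_mono hMK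
  gcongr

section AbsoluteMoments

variable {Ω ι : Type*} [MeasurableSpace Ω] {P : Measure Ω} {μ : Measure ℝ} {X : ι → Ω → ℝ}

theorem Multiset.sum_count_div_card [DecidableEq ι] {T : Multiset ι} (hT : T ≠ 0) :
    ∑ i ∈ T.toFinset, (T.count i / Multiset.card T : ℝ) = 1 := by
  rw [← Finset.sum_div, ← Nat.cast_sum, Multiset.toFinset_sum_count_eq,
    div_self (by simpa using hT)]

theorem Multiset.prod_map_le_sum_count_mul_pow [DecidableEq ι] {T : Multiset ι} (hT : T ≠ 0)
    {f : ι → ℝ} (hf : ∀ i, 0 ≤ f i) :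
    (T.map f).prod ≤
      ∑ i ∈ T.toFinset, (T.count i / Multiset.card T : ℝ) * f i ^ Multiset.card T := by
  have hn : (Multiset.card T : ℝ) ≠ 0 := by simpa using hT
  calc (T.map f).prod
      = ∏ i ∈ T.toFinset, (f i ^ Multiset.card T) ^ (T.count i / Multiset.card T : ℝ) := by
        rw [Finset.prod_multiset_map_count]
        refine Finset.prod_congr rfl fun i _ => ?_
        rw [← Real.rpow_natCast (f i) (Multiset.card T), ← Real.rpow_mul (hf i),
          mul_div_cancel₀ _ hn, Real.rpow_natCast]
    _ ≤ _ := Real.geom_mean_le_arith_mean_weighted _ _ _ (fun i _ => by positivity)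
        (Multiset.sum_count_div_card hT) (fun i _ => pow_nonneg (hf i) _)

theorem integral_abs_pow_eq_of_map_eq {i : ι} (hX : Measurable (X i)) (hlaw : P.map (X i) = μ)
    (M : ℕ) : ∫ ω, |X i ω| ^ M ∂P = ∫ x, |x| ^ M ∂μ := by
  rw [← hlaw, integral_map hX.aemeasurable (by fun_prop)]

theorem integrable_abs_pow_of_map_eq {i : ι} (hX : Measurable (X i)) (hlaw : P.map (X i) = μ)
    {M : ℕ} (hint : Integrable (fun x => |x| ^ M) μ) : Integrable (fun ω => |X i ω| ^ M) P := by
  rw [← hlaw] at hint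
  exact hint.comp_measurable hX

theorem integrable_prod_abs [IsFiniteMeasure P] (hX : ∀ i, Measurable (X i))
    (hlaw : ∀ i, P.map (X i) = μ) (hint : ∀ M : ℕ, Integrable (fun x => |x| ^ M) μ)
    (T : Multiset ι) :
    Integrable (fun ω => (T.map fun i => |X i ω|).prod) P := by
  classical
  rcases eq_or_ne T 0 with rfl | hT
  · simp
  have hsum := fun i (_ : i ∈ T.toFinset) =>
    (integrable_abs_pow_of_map_eq (hX i) (hlaw i) (hint (Multiset.card T))).const_mul
      (T.count i / Multiset.card T : ℝ)
  refine (integrable_finsetSum _ hsum).mono' ?_ (ae_of_all _ fun ω => ?_)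
  · simp_rw [Finset.prod_multiset_map_count]
    exact (Finset.measurable_fun_prod _ fun i _ => by fun_prop).aestronglyMeasurable
  · rw [Real.norm_of_nonneg (Multiset.prod_nonneg fun x hx => ?_)]
    · exact Multiset.prod_map_le_sum_count_mul_pow hT fun i => abs_nonneg _
    · obtain ⟨i, -, rfl⟩ := Multiset.mem_map.1 hx
      exact abs_nonneg _

theorem integral_prod_abs_le [IsProbabilityMeasure P] [IsProbabilityMeasure μ]
    (hX : ∀ i, Measurable (X i)) (hlaw : ∀ i, P.map (X i) = μ)
    (hint : ∀ M : ℕ, Integrable (fun x => |x| ^ M) μ) (T : Multiset ι) :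
    ∫ ω, (T.map fun i => |X i ω|).prod ∂P ≤ ∫ x, |x| ^ Multiset.card T ∂μ := by
  classical
  rcases eq_or_ne T 0 with rfl | hT
  · simp
  have hsum := fun i (_ : i ∈ T.toFinset) =>
    (integrable_abs_pow_of_map_eq (hX i) (hlaw i) (hint (Multiset.card T))).const_mul
      (T.count i / Multiset.card T : ℝ)
  calc ∫ ω, (T.map fun i => |X i ω|).prod ∂P
      ≤ ∫ ω, ∑ i ∈ T.toFinset,
          (T.count i / Multiset.card T : ℝ) * |X i ω| ^ Multiset.card T ∂P :=
        integral_mono (integrable_prod_abs hX hlaw hint T) (integrable_finsetSum _ hsum)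
          fun ω => Multiset.prod_map_le_sum_count_mul_pow hT fun i => abs_nonneg _
    _ = ∫ x, |x| ^ Multiset.card T ∂μ := by
        simp_rw [integral_finsetSum _ hsum, integral_const_mul,
          integral_abs_pow_eq_of_map_eq (hX _) (hlaw _), ← Finset.sum_mul,
          Multiset.sum_count_div_card hT, one_mul]

end AbsoluteMoments

theorem sum_abs_pow_apply_le_pow_mulVec_one {N : Type*} [Fintype N] [DecidableEq N]
    {H B : Matrix N N ℝ} (hHB : ∀ s m, |H s m| ≤ B s m) (j : ℕ) (s : N) :
    ∑ m, |(H ^ j) s m| ≤ (B ^ j *ᵥ 1) s := by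
  induction j generalizing s with
  | zero => simp [one_apply, apply_ite (|·|)]
  | succ j ih =>
    calc ∑ m', |(H ^ (j + 1)) s m'|
        ≤ ∑ m', ∑ m, |H s m| * |(H ^ j) m m'| := by
          gcongr with m'
          rw [pow_succ', mul_apply]
          simpa only [abs_mul] using
            Finset.abs_sum_le_sum_abs (fun m => H s m * (H ^ j) m m') Finset.univ
      _ = ∑ m, |H s m| * ∑ m', |(H ^ j) m m'| := by
          rw [Finset.sum_comm]
          simp_rw [Finset.mul_sum]
      _ ≤ ∑ m, B s m * (B ^ j *ᵥ 1) m := by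
          gcongr with m
          exacts [(abs_nonneg _).trans (hHB s m), hHB s m, ih m]
      _ = (B ^ (j + 1) *ᵥ 1) s := by
          rw [pow_succ', ← mulVec_mulVec]
          rfl

section LazyWalks

variable {V : Type*} [Fintype V] [DecidableEq V] (G : SimpleGraph V) [DecidableRel G.Adj]

/-- The sum, over the lazy walks of length `j` from `s` (each step moves to a neighbour or stays
put), of the product of the weights `w` at the steps where the walk stays put. -/
def lazyWalkSum (w : V → ℝ) (j : ℕ) : V → ℝ :=
  (G.adjMatrix ℝ + diagonal w) ^ j *ᵥ 1

theorem lazyWalkSum_succ_apply (w : V → ℝ) (j : ℕ) (s : V) :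
    lazyWalkSum G w (j + 1) s =
      ∑ m ∈ G.neighborFinset s, lazyWalkSum G w j m + w s * lazyWalkSum G w j s := by
  rw [lazyWalkSum, pow_succ', ← mulVec_mulVec, add_mulVec, Pi.add_apply,
    SimpleGraph.adjMatrix_mulVec_apply, mulVec_diagonal]
  rfl

theorem prod_mul_lazyWalkSum_succ (w : V → ℝ) (T : Multiset V) (j : ℕ) (s : V) :
    (T.map w).prod * lazyWalkSum G w (j + 1) s =
      ∑ m ∈ G.neighborFinset s, (T.map w).prod * lazyWalkSum G w j m +
        ((s ::ₘ T).map w).prod * lazyWalkSum G w j s := by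
  rw [lazyWalkSum_succ_apply, mul_add, Finset.mul_sum, Multiset.map_cons, Multiset.prod_cons]
  ring

variable {Ω : Type*} [MeasurableSpace Ω] {P : Measure Ω} {μ : Measure ℝ} {X : V → Ω → ℝ}

theorem integrable_prod_mul_lazyWalkSum [IsFiniteMeasure P] (hX : ∀ v, Measurable (X v))
    (hlaw : ∀ v, P.map (X v) = μ) (hint : ∀ M : ℕ, Integrable (fun x => |x| ^ M) μ)
    (T : Multiset V) (j : ℕ) (s : V) :
    Integrable (fun ω => (T.map fun v => |X v ω|).prod *
      lazyWalkSum G (fun v => |X v ω|) j s) P := by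
  induction j generalizing T s with
  | zero => simpa [lazyWalkSum] using integrable_prod_abs hX hlaw hint T
  | succ j ih =>
    simp_rw [prod_mul_lazyWalkSum_succ]
    exact (integrable_finsetSum _ fun m _ => ih T m).add (ih (s ::ₘ T) s)

theorem integral_prod_mul_lazyWalkSum_le [IsProbabilityMeasure P] [IsProbabilityMeasure μ]
    (hX : ∀ v, Measurable (X v)) (hlaw : ∀ v, P.map (X v) = μ)
    (hint : ∀ M : ℕ, Integrable (fun x => |x| ^ M) μ) {D : ℕ} (hD : ∀ v, G.degree v ≤ D)
    {B : ℝ} (T : Multiset V) (j : ℕ) (s : V)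
    (hB : ∀ M ≤ Multiset.card T + j, ∫ x, |x| ^ M ∂μ ≤ B) :
    ∫ ω, (T.map fun v => |X v ω|).prod * lazyWalkSum G (fun v => |X v ω|) j s ∂P ≤
      ((D : ℝ) + 1) ^ j * B := by
  induction j generalizing T s with
  | zero => simpa [lazyWalkSum] using (integral_prod_abs_le hX hlaw hint T).trans (hB _ le_rfl)
  | succ j ih =>
    have hB0 : 0 ≤ B := (integral_nonneg fun _ => by positivity).trans (hB 0 (Nat.zero_le _))
    simp_rw [prod_mul_lazyWalkSum_succ]
    rw [integral_add (integrable_finsetSum _ fun m _ =>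
        integrable_prod_mul_lazyWalkSum G hX hlaw hint T j m)
        (integrable_prod_mul_lazyWalkSum G hX hlaw hint _ j s),
      integral_finsetSum _ fun m _ => integrable_prod_mul_lazyWalkSum G hX hlaw hint T j m]
    calc _ ≤ ∑ m ∈ G.neighborFinset s, ((D : ℝ) + 1) ^ j * B + ((D : ℝ) + 1) ^ j * B :=
          add_le_add (Finset.sum_le_sum fun m _ => ih T m fun M hM => hB M (by omega))
            (ih (s ::ₘ T) s fun M hM => hB M (by simp at hM; omega))
      _ = (G.degree s + 1) * (((D : ℝ) + 1) ^ j * B) := by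
          rw [Finset.sum_const, SimpleGraph.card_neighborFinset_eq_degree, nsmul_eq_mul]
          ring
      _ ≤ ((D : ℝ) + 1) ^ (j + 1) * B := by
          rw [pow_succ, mul_comm _ ((D : ℝ) + 1), mul_assoc]
          gcongr
          exact_mod_cast hD s

end LazyWalks

theorem exists_eq_single_of_sum_abs_eq_one {ι : Type*} [Fintype ι] [DecidableEq ι] {x : ι → ℤ}
    (h : ∑ i, |x i| = 1) :
    ∃ i, |x i| = 1 ∧ x = Pi.single i (x i) := by
  obtain ⟨i, hi⟩ : ∃ i, x i ≠ 0 := by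
    by_contra! h0
    simp [h0] at h
  rw [← Finset.add_sum_erase _ _ (Finset.mem_univ i)] at h
  have hrest : ∑ j ∈ Finset.univ.erase i, |x j| = 0 := by
    have := Int.one_le_abs hi
    have := Finset.sum_nonneg fun j (_ : j ∈ Finset.univ.erase i) => abs_nonneg (x j)
    omega
  refine ⟨i, by omega, funext fun j => ?_⟩
  rcases eq_or_ne j i with rfl | hj
  · simp
  · rw [Pi.single_eq_of_ne hj]
    exact abs_eq_zero.1 ((Finset.sum_eq_zero_iff_of_nonneg fun _ _ => abs_nonneg _).1 hrest j
      (Finset.mem_erase.2 ⟨hj, Finset.mem_univ j⟩))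

def cubeGraph (d L : ℕ) : SimpleGraph (cube d L) where
  Adj n m := ∑ i, |(n : Fin d → ℤ) i - (m : Fin d → ℤ) i| = 1
  symm.symm n m h := by simpa only [abs_sub_comm] using h
  loopless.irrefl n h := by simp at h

theorem cubeGraph_adj {d L : ℕ} {n m : cube d L} :
    (cubeGraph d L).Adj n m ↔ ∑ i, |(n : Fin d → ℤ) i - (m : Fin d → ℤ) i| = 1 :=
  Iff.rfl

instance (d L : ℕ) : DecidableRel (cubeGraph d L).Adj :=
  fun _ _ => Int.decEq _ _

theorem cubeGraph_degree_le (d L : ℕ) (n : cube d L) : (cubeGraph d L).degree n ≤ 2 * d := by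
  have hsub :
      ((cubeGraph d L).neighborFinset n).image (fun m : cube d L => (n : Fin d → ℤ) - m) ⊆
        (Finset.univ ×ˢ {1, -1}).image fun iε : Fin d × ℤ => Pi.single iε.1 iε.2 := by
    intro x hx
    obtain ⟨m, hm, rfl⟩ := Finset.mem_image.1 hx
    obtain ⟨i, hi, hx⟩ := exists_eq_single_of_sum_abs_eq_one
      (x := (n : Fin d → ℤ) - (m : Fin d → ℤ)) ((SimpleGraph.mem_neighborFinset _ _ _).1 hm)
    refine Finset.mem_image.2 ⟨(i, ((n : Fin d → ℤ) - m) i), ?_, hx.symm⟩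
    simpa [abs_eq zero_le_one] using hi
  calc (cubeGraph d L).degree n
      = (((cubeGraph d L).neighborFinset n).image
          fun m : cube d L => (n : Fin d → ℤ) - m).card :=
        (Finset.card_image_of_injective _ (sub_right_injective.comp Subtype.val_injective)).symm
    _ ≤ _ := Finset.card_le_card hsub
    _ ≤ 2 * d := Finset.card_image_le.trans (by simp [mul_comm])

theorem ham_eq_adjMatrix_add_diagonal (d L : ℕ) (ω : Cfg d) :
    ham d L ω = (cubeGraph d L).adjMatrix ℝ + diagonal fun n : cube d L => ω n := by
  ext n m
  simp only [ham, of_apply, Matrix.add_apply, SimpleGraph.adjMatrix_apply, cubeGraph_adj,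
    diagonal_apply]
  rcases eq_or_ne n m with rfl | h
  · simp
  · simp [h]

theorem abs_adjMatrix_add_diagonal_apply_le {V : Type*} [DecidableEq V] (G : SimpleGraph V)
    [DecidableRel G.Adj] {v w : V → ℝ} (h : ∀ s, |v s| ≤ w s) (s m : V) :
    |(G.adjMatrix ℝ + diagonal v) s m| ≤ (G.adjMatrix ℝ + diagonal w) s m := by
  rcases eq_or_ne s m with rfl | hsm
  · simpa using h s
  · simp only [Matrix.add_apply, diagonal_apply_ne _ hsm, add_zero, SimpleGraph.adjMatrix_apply]
    split_ifs <;> simp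

theorem abs_pow_mul_ham_update_pow_apply_le {d L : ℕ} (ω : Cfg d) {u : ℝ} (hu : |u| ≤ 1)
    (q k : ℕ) (n : cube d L) :
    |ω n ^ q * (ham d L (Function.update ω n (u * ω n)) ^ k) n n| ≤
      ((Multiset.replicate q n).map fun t : cube d L => |ω t|).prod *
        lazyWalkSum (cubeGraph d L) (fun t => |ω t|) k n := by
  have hdom (t : cube d L) : |Function.update ω n (u * ω n) t| ≤ |ω t| := by
    rw [Function.update_apply]
    split_ifs with h
    · rw [h, abs_mul]
      exact mul_le_of_le_one_left (abs_nonneg _) hu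
    · exact le_rfl
  rw [abs_mul, abs_pow, Multiset.map_replicate, Multiset.prod_replicate]
  gcongr
  calc _ ≤ ∑ m, |(ham d L (Function.update ω n (u * ω n)) ^ k) n m| :=
        Finset.single_le_sum (fun m _ => abs_nonneg _) (Finset.mem_univ n)
    _ ≤ _ := by
        rw [ham_eq_adjMatrix_add_diagonal]
        exact sum_abs_pow_apply_le_pow_mulVec_one
          (abs_adjMatrix_add_diagonal_apply_le _ fun t => hdom t) k n

theorem nubar_moment_bound_general (d : ℕ) (μ : Measure ℝ) [IsProbabilityMeasure μ]
    (Pr : Measure (Cfg d)) [IsProbabilityMeasure Pr] (hiid : IID d μ Pr)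
    (hint : ∀ k : ℕ, Integrable (fun x => |x| ^ k) μ)
    (C a : ℝ) (hC : 1 ≤ C) (ha : 1 ≤ a)
    (hmom : ∀ k : ℕ, (∫ x, |x| ^ k ∂μ) ≤ C * a ^ k * (k : ℝ) ^ k)
    (p k : ℕ) (hk : 1 ≤ k) (L : ℕ) :
    |(((cube d L).card : ℝ))⁻¹ *
        ∑ n ∈ (cube d L).attach,
          ∫ u in Set.Icc (0 : ℝ) 1,
            ∫ ω, (ω (n : Fin d → ℤ)) ^ (2 * p) *
              ((ham d L (Function.update ω (n : Fin d → ℤ) (u * ω (n : Fin d → ℤ)))) ^ k)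
                n n ∂Pr| ≤
      (2 * (d : ℝ) + 1) ^ k * C ^ k * a ^ (k + 2 * p) *
        ((k : ℝ) + 2 * p) ^ (k + 2 * p) := by
  obtain ⟨-, hlaw⟩ := hiid
  have hX (n : cube d L) : Measurable fun ω : Cfg d => ω n := measurable_pi_apply _
  have hB (M : ℕ) (hM : M ≤ k + 2 * p) :
      ∫ x, |x| ^ M ∂μ ≤ C ^ k * a ^ (k + 2 * p) * ((k : ℝ) + 2 * p) ^ (k + 2 * p) := by
    calc ∫ x, |x| ^ M ∂μ ≤ C * a ^ (k + 2 * p) * ((k + 2 * p : ℕ) : ℝ) ^ (k + 2 * p) :=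
          integral_abs_pow_le_of_le (by linarith) ha hmom hM
      _ ≤ _ := by
          push_cast
          gcongr
          exact le_self_pow₀ hC (by omega)
  rw [← Finset.card_attach]
  refine abs_inv_card_mul_sum_le _ _ (by positivity) fun n _ => ?_
  refine abs_setIntegral_Icc_zero_one_le fun u hu => ?_
  refine (norm_integral_le_of_norm_le
    (integrable_prod_mul_lazyWalkSum _ hX (fun n => hlaw n) hint _ k n)
    (ae_of_all _ fun ω => (Real.norm_eq_abs _).trans_le
      (abs_pow_mul_ham_update_pow_apply_le ω ?_ (2 * p) k n))).trans ?_
  · exact abs_le.2 ⟨by linarith [hu.1], hu.2⟩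
  · refine (integral_prod_mul_lazyWalkSum_le _ hX (fun n => hlaw n) hint
      (cubeGraph_degree_le d L) (Multiset.replicate (2 * p) n) k n fun M hM =>
        hB M (by rw [Multiset.card_replicate] at hM; omega)).trans_eq ?_
    push_cast
    ring

/-- bound on the moments of the modified finite-volume measure `ν̄_{p,L}`. -/
theorem nubar_moment_bound (d : ℕ) (hd : 1 ≤ d) (μ : Measure ℝ) [IsProbabilityMeasure μ]
    (Pr : Measure (Cfg d)) [IsProbabilityMeasure Pr] (hiid : IID d μ Pr)
    (hint : ∀ k : ℕ, Integrable (fun x => |x| ^ k) μ)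
    (C a : ℝ) (hC : 1 ≤ C) (ha : 1 ≤ a)
    (hmom : ∀ k : ℕ, (∫ x, |x| ^ k ∂μ) ≤ C * a ^ k * (k : ℝ) ^ k)
    (p k : ℕ) (hk : 1 ≤ k) (L : ℕ) :
    |(((cube d L).card : ℝ))⁻¹ *
        ∑ n ∈ (cube d L).attach,
          ∫ u in Set.Icc (0 : ℝ) 1,
            ∫ ω, (ω (n : Fin d → ℤ)) ^ (2 * p) *
              ((ham d L (Function.update ω (n : Fin d → ℤ) (u * ω (n : Fin d → ℤ)))) ^ k)
                n n ∂Pr| ≤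
      (2 * (d : ℝ) + 1) ^ k * C ^ k * a ^ (k + 2 * p) *
        ((k : ℝ) + 2 * p) ^ (k + 2 * p) :=
  nubar_moment_bound_general d μ Pr hiid hint C a hC ha hmom p k hk L
end
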